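/- arXiv:0905.4874 — 5 statements merged into one kernel-verified Lean document; each statement's English description precedes it below -/
import Mathlib

section
/- Let L be a convex body in ℝ² of diameter at most D containing the origin, and let u be a unit vector. Let Ψ(r u + L) denote the angle subtended at the origin O by the translated body r u + L (the angular measure of the set of directions v with (O + ℝ₊ v) ∩ (ru + L) ≠ ∅). Then r·Ψ(ru + L) → W_u(L) as r → ∞, where W_u(L) is the width of L in the direction orthogonal to u; moreover the convergence is uniform over unit vectors u and over all such convex bodies L of diameter ≤ D containing the origin. -/
open MeasureTheory Pointwise

/-- The point of `ℝ² = EuclideanSpace ℝ (Fin 2)` with coordinates `a`, `b`. -/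
noncomputable def e2 (a b : ℝ) : EuclideanSpace ℝ (Fin 2) :=
  (EuclideanSpace.equiv (Fin 2) ℝ).symm ![a, b]

/-- The angle of vision of a set `A ⊆ ℝ²` from the origin: the angular measure of the set of
directions `v` such that the ray `ℝ₊ v` from the origin meets `A`. -/
noncomputable def angleOfVision (A : Set (EuclideanSpace ℝ (Fin 2))) : ℝ :=
  (volume {θ : ℝ | θ ∈ Set.Ico 0 (2*Real.pi) ∧
      ∃ t : ℝ, 0 ≤ t ∧ t • e2 (Real.cos θ) (Real.sin θ) ∈ A}).toReal

/-- The width `W_u(L)` of `L` in the direction `v = u^⊥` orthogonal to `u`: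
`sup_{x,y ∈ L} ⟨y - x, v⟩`. -/
noncomputable def widthOrth (u : EuclideanSpace ℝ (Fin 2))
    (L : Set (EuclideanSpace ℝ (Fin 2))) : ℝ :=
  sSup ((fun p : EuclideanSpace ℝ (Fin 2) × EuclideanSpace ℝ (Fin 2) =>
    (inner ℝ (p.2 - p.1) (e2 (-(u 1)) (u 0)) : ℝ)) '' (L ×ˢ L))

/-!
Write `u = (cos φ, sin φ)` and `v = u^⊥`. For `r ≥ 2D` the body `ru + L` lies in the open
half-plane `⟪x, u⟫ > 0`, so the ray of direction `θ` meets it exactly when `cos (θ - φ) > 0` and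
`tan (θ - φ)` is one of the slopes `⟪x, v⟫ / ⟪x, u⟫`, `x ∈ ru + L`. By convexity and compactness
these slopes fill an interval `[m, M]`, hence `Ψ(ru + L) = arctan M - arctan m`. If
`B = max ⟪·, v⟫` on `ru + L`, then `B / (r + D) ≤ M ≤ B / (r - D)`, and `x - x³ ≤ arctan x ≤ x`
gives `|r arctan M - B| ≤ 2D²/r`; the same holds for `m` and the minimum of `⟪·, v⟫`, whose
difference with `B` is the width.
-/

open Real Set

namespace Real

theorem arctan_le_self {x : ℝ} (hx : 0 ≤ x) : arctan x ≤ x := by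
  have h := le_tan (arctan_nonneg.2 hx) (arctan_lt_pi_div_two x)
  rwa [tan_arctan] at h

theorem self_sub_pow_three_le_arctan {x : ℝ} (hx : 0 ≤ x) : x - x ^ 3 ≤ arctan x := by
  have hsqrt : √(1 + x ^ 2) ≤ 1 + x ^ 2 :=
    (sqrt_le_left (by positivity)).2 (by nlinarith [sq_nonneg x])
  calc x - x ^ 3 ≤ x / (1 + x ^ 2) := by
        rw [le_div_iff₀ (by positivity)]; nlinarith [pow_nonneg hx 5]
    _ ≤ x / √(1 + x ^ 2) := div_le_div_of_nonneg_left hx (by positivity) hsqrt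
    _ = sin (arctan x) := (sin_arctan x).symm
    _ ≤ arctan x := sin_le (arctan_nonneg.2 hx)

theorem abs_mul_arctan_sub_le {r D B M : ℝ} (hr : 0 < r) (hDr : 2 * D ≤ r) (hB : B ∈ Icc 0 D)
    (hM : M ∈ Icc (B / (r + D)) (B / (r - D))) : |r * arctan M - B| ≤ 2 * D ^ 2 / r := by
  obtain ⟨hB0, hBD⟩ := hB
  have hD : 0 ≤ D := hB0.trans hBD
  set x := B / (r + D) with hx
  set y := B / (r - D) with hy
  have hxB : x * (r + D) = B := div_mul_cancel₀ _ (by linarith)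
  have hyB : y * (r - D) = B := div_mul_cancel₀ _ (by linarith)
  have hx0 : 0 ≤ x := by positivity
  have hrx : r * x ≤ D := by nlinarith
  have hry : r * y ≤ 2 * D := by nlinarith [div_nonneg hB0 (by linarith : (0 : ℝ) ≤ r - D)]
  rw [abs_sub_le_iff, le_div_iff₀ hr, le_div_iff₀ hr]
  constructor
  · have harctan : arctan M ≤ y := (arctan_le_self (hx0.trans hM.1)).trans hM.2
    nlinarith [mul_le_mul_of_nonneg_left harctan hr.le]
  · have hcube : r * x ^ 3 * r ≤ D ^ 2 / 2 := by
      have : (r * x) ^ 2 ≤ D ^ 2 := pow_le_pow_left₀ (by positivity) hrx 2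
      nlinarith [mul_le_mul_of_nonneg_left hDr (by positivity : 0 ≤ (r * x) ^ 2)]
    have harctan : x - x ^ 3 ≤ arctan M :=
      (self_sub_pow_three_le_arctan hx0).trans (arctan_le_arctan_iff.2 hM.1)
    nlinarith [mul_le_mul_of_nonneg_left harctan hr.le]


theorem exists_int_sub_mem_Ioo_of_cos_pos {ψ : ℝ} (h : 0 < cos ψ) :
    ∃ k : ℤ, ψ - 2 * π * k ∈ Ioo (-(π / 2)) (π / 2) := by
  set α := (ψ : Angle).toReal
  obtain ⟨k, hk⟩ := Angle.angle_eq_iff_two_pi_dvd_sub.1 (Angle.coe_toReal (ψ : Angle)).symm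
  have hα : |α| < π / 2 := Angle.cos_pos_iff_abs_toReal_lt_pi_div_two.1 (by rwa [Angle.cos_coe])
  exact ⟨k, by rw [← hk, sub_sub_cancel]; exact abs_lt.1 hα⟩

theorem cos_pos_and_tan_mem_Icc_iff {ψ m M : ℝ} :
    0 < cos ψ ∧ tan ψ ∈ Icc m M ↔ ∃ k : ℤ, ψ - 2 * π * k ∈ Icc (arctan m) (arctan M) := by
  have htan_period (k : ℤ) : tan (ψ - 2 * π * k) = tan ψ := by
    rw [show 2 * π * (k : ℝ) = ((2 * k : ℤ) : ℝ) * π by push_cast; ring, tan_sub_int_mul_pi]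
  have hcos_period (k : ℤ) : cos (ψ - 2 * π * k) = cos ψ := by
    rw [show 2 * π * (k : ℝ) = (k : ℤ) * (2 * π) by ring, cos_sub_int_mul_two_pi]
  have mem_Icc_arctan {α : ℝ} (hα : α ∈ Ioo (-(π / 2)) (π / 2)) :
      tan α ∈ Icc m M ↔ α ∈ Icc (arctan m) (arctan M) := by
    simp only [mem_Icc, ← arctan_le_arctan_iff (y := tan α), ← arctan_le_arctan_iff (x := tan α),
      arctan_tan hα.1 hα.2]
  constructor
  · rintro ⟨hcos, htan⟩
    obtain ⟨k, hk⟩ := exists_int_sub_mem_Ioo_of_cos_pos hcos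
    exact ⟨k, (mem_Icc_arctan hk).1 (by rwa [htan_period])⟩
  · rintro ⟨k, hk⟩
    have hk' : ψ - 2 * π * k ∈ Ioo (-(π / 2)) (π / 2) :=
      ⟨(neg_pi_div_two_lt_arctan m).trans_le hk.1, hk.2.trans_lt (arctan_lt_pi_div_two M)⟩
    rw [← hcos_period k, ← htan_period k]
    exact ⟨cos_pos_of_mem_Ioo hk', (mem_Icc_arctan hk').2 hk⟩

end Real

section Extrema

variable {ι : Type*} {s : Set ι} {a b : ι → ℝ} {r D B M : ℝ}

theorem IsLeast.isGreatest_image_neg (h : IsLeast (b '' s) B) :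
    IsGreatest ((fun x => -b x) '' s) (-B) := by
  obtain ⟨x, hx, rfl⟩ := h.1
  exact ⟨⟨x, hx, rfl⟩, by rintro _ ⟨y, hy, rfl⟩; exact neg_le_neg (h.2 ⟨y, hy, rfl⟩)⟩

theorem isGreatest_image_prod_sub {b' : ℝ} (hB : IsGreatest (b '' s) B)
    (hb' : IsLeast (b '' s) b') :
    IsGreatest ((fun p : ι × ι => b p.2 - b p.1) '' s ×ˢ s) (B - b') := by
  obtain ⟨y, hy, rfl⟩ := hB.1
  obtain ⟨x, hx, rfl⟩ := hb'.1
  refine ⟨⟨(x, y), ⟨hx, hy⟩, rfl⟩, ?_⟩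
  rintro _ ⟨⟨x', y'⟩, ⟨hx', hy'⟩, rfl⟩
  exact sub_le_sub (hB.2 ⟨y', hy', rfl⟩) (hb'.2 ⟨x', hx', rfl⟩)

theorem div_mem_Icc_of_isGreatest (hDr : D < r) (ha : ∀ x ∈ s, |a x - r| ≤ D) (hB0 : 0 ≤ B)
    (hB : IsGreatest (b '' s) B) (hM : IsGreatest ((fun x => b x / a x) '' s) M) :
    M ∈ Icc (B / (r + D)) (B / (r - D)) := by
  have ha' : ∀ x ∈ s, r - D ≤ a x ∧ a x ≤ r + D := fun x hx => by
    have := abs_le.1 (ha x hx); constructor <;> linarith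
  constructor
  · obtain ⟨x, hx, rfl⟩ := hB.1
    exact (div_le_div_of_nonneg_left hB0 (by linarith [ha' x hx]) (ha' x hx).2).trans
      (hM.2 ⟨x, hx, rfl⟩)
  · obtain ⟨x, hx, rfl⟩ := hM.1
    have hax : 0 < a x := by linarith [ha' x hx]
    exact (div_le_div_of_nonneg_right (hB.2 ⟨x, hx, rfl⟩) hax.le).trans
      (div_le_div_of_nonneg_left hB0 (by linarith) (ha' x hx).1)

theorem abs_mul_arctan_sub_le_of_isGreatest (hr : 0 < r) (hDr : 2 * D ≤ r)
    (ha : ∀ x ∈ s, |a x - r| ≤ D) (hb : ∀ x ∈ s, |b x| ≤ D) (h0 : 0 ∈ b '' s)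
    (hB : IsGreatest (b '' s) B) (hM : IsGreatest ((fun x => b x / a x) '' s) M) :
    |r * arctan M - B| ≤ 2 * D ^ 2 / r := by
  have hBD : B ≤ D := by
    obtain ⟨x, hx, rfl⟩ := hB.1
    exact (le_abs_self _).trans (hb x hx)
  exact abs_mul_arctan_sub_le hr hDr ⟨hB.2 h0, hBD⟩
    (div_mem_Icc_of_isGreatest (by linarith) ha (hB.2 h0) hB hM)

theorem abs_mul_arctan_sub_le_of_isLeast (hr : 0 < r) (hDr : 2 * D ≤ r)
    (ha : ∀ x ∈ s, |a x - r| ≤ D) (hb : ∀ x ∈ s, |b x| ≤ D) (h0 : 0 ∈ b '' s)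
    (hB : IsLeast (b '' s) B) (hM : IsLeast ((fun x => b x / a x) '' s) M) :
    |r * arctan M - B| ≤ 2 * D ^ 2 / r := by
  obtain ⟨x₀, hx₀, hbx₀⟩ := h0
  have hneg := abs_mul_arctan_sub_le_of_isGreatest (b := fun x => -b x) hr hDr ha
    (fun x hx => (abs_neg (b x)).trans_le (hb x hx)) ⟨x₀, hx₀, by simp [hbx₀]⟩
    hB.isGreatest_image_neg (by simpa only [neg_div] using hM.isGreatest_image_neg)
  rwa [arctan_neg, show r * -arctan M - -B = -(r * arctan M - B) by ring, abs_neg] at hneg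

end Extrema

theorem volume_setOf_mem_Ico_and_exists_sub_mul_mem_Icc {T c d : ℝ} (hT : 0 < T)
    (hdc : d - c < T) :
    volume {θ : ℝ | θ ∈ Ico 0 T ∧ ∃ k : ℤ, θ - T * k ∈ Icc c d} = ENNReal.ofReal (d - c) := by
  set S := {θ : ℝ | ∃ k : ℤ, θ - T * k ∈ Icc c d}
  have hS : MeasurableSet S := by
    simp only [S, ofPred_exists]
    exact .iUnion fun k => measurable_sub_const _ measurableSet_Icc
  have hS_invariant : ∀ g : AddSubgroup.zmultiples T, (g +ᵥ ·) ⁻¹' S = S := by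
    rintro ⟨_, n, rfl⟩
    ext θ
    simp only [S, mem_preimage, mem_ofPred_eq, AddSubgroup.vadd_def, vadd_eq_add, zsmul_eq_mul]
    refine ⟨fun ⟨k, hk⟩ => ⟨k - n, ?_⟩, fun ⟨k, hk⟩ => ⟨k + n, ?_⟩⟩ <;> push_cast <;>
      convert hk using 1 <;> ring
  -- `Ioc (d - T) d` is a fundamental domain that contains `Icc c d` and no other translate of it
  have hS_inter : S ∩ Ioc (d - T) (d - T + T) = Icc c d := by
    ext θ
    simp only [S, mem_inter_iff, mem_ofPred_eq, mem_Icc, mem_Ioc, sub_add_cancel]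
    constructor
    · rintro ⟨⟨k, hck, hkd⟩, hθ, hθd⟩
      have hk : k = 0 := by
        have h1 : (k : ℝ) < 1 := by nlinarith
        have h2 : (-1 : ℝ) < k := by nlinarith
        have : k < 1 := by exact_mod_cast h1
        have : -1 < k := by exact_mod_cast h2
        omega
      subst hk
      simp only [Int.cast_zero, mul_zero, sub_zero] at hck
      exact ⟨hck, hθd⟩
    · rintro ⟨hcθ, hθd⟩
      exact ⟨⟨0, by simpa using ⟨hcθ, hθd⟩⟩, by linarith, hθd⟩
  have hae : (S ∩ Ico 0 T : Set ℝ) =ᵐ[volume] (S ∩ Ioc 0 (0 + T) : Set ℝ) := by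
    rw [zero_add]; exact (Filter.EventuallyEq.refl _ _).inter Ico_ae_eq_Ioc
  rw [show {θ : ℝ | θ ∈ Ico 0 T ∧ ∃ k : ℤ, θ - T * k ∈ Icc c d} = S ∩ Ico 0 T from
      Set.ext fun θ => and_comm, measure_congr hae,
    (isAddFundamentalDomain_Ioc hT 0 volume).measure_set_eq
      (isAddFundamentalDomain_Ioc hT (d - T) volume) hS hS_invariant,
    hS_inter, volume_Icc]

open scoped RealInnerProductSpace

local notation "ℝ²" => EuclideanSpace ℝ (Fin 2)

noncomputable def perp (u : ℝ²) : ℝ² := e2 (-(u 1)) (u 0)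

noncomputable def tanAngle (u x : ℝ²) : ℝ := ⟪x, perp u⟫ / ⟪x, u⟫

@[simp] theorem e2_apply_zero (a b : ℝ) : e2 a b 0 = a := rfl

@[simp] theorem e2_apply_one (a b : ℝ) : e2 a b 1 = b := rfl

theorem inner_eq_fin_two (x y : ℝ²) : ⟪x, y⟫ = x 0 * y 0 + x 1 * y 1 := by
  simp [PiLp.inner_apply, Fin.sum_univ_two, mul_comm]

theorem norm_sq_eq_fin_two (x : ℝ²) : ‖x‖ ^ 2 = x 0 ^ 2 + x 1 ^ 2 := by
  simp [EuclideanSpace.norm_sq_eq, Fin.sum_univ_two]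

theorem inner_self_perp (u : ℝ²) : ⟪u, perp u⟫ = 0 := by
  simp only [inner_eq_fin_two, perp, e2_apply_zero, e2_apply_one]; ring

theorem norm_perp (u : ℝ²) : ‖perp u‖ = ‖u‖ := by
  rw [← sq_eq_sq₀ (norm_nonneg _) (norm_nonneg _), norm_sq_eq_fin_two, norm_sq_eq_fin_two]
  simp only [perp, e2_apply_zero, e2_apply_one]; ring

theorem eq_of_inner_eq_of_inner_perp_eq {u x y : ℝ²} (hu : ‖u‖ = 1) (h : ⟪x, u⟫ = ⟪y, u⟫)
    (h' : ⟪x, perp u⟫ = ⟪y, perp u⟫) : x = y := by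
  have hu2 : u 0 ^ 2 + u 1 ^ 2 = 1 := by rw [← norm_sq_eq_fin_two, hu, one_pow]
  simp only [inner_eq_fin_two, perp, e2_apply_zero, e2_apply_one] at h h'
  ext i
  fin_cases i
  · show x 0 = y 0
    linear_combination u 0 * h - u 1 * h' + (y 0 - x 0) * hu2
  · show x 1 = y 1
    linear_combination u 1 * h + u 0 * h' + (y 1 - x 1) * hu2

theorem exists_eq_e2_cos_sin {u : ℝ²} (hu : ‖u‖ = 1) : ∃ φ : ℝ, u = e2 (cos φ) (sin φ) := by
  obtain ⟨φ, hφ⟩ := (Complex.norm_eq_one_iff ⟨u 0, u 1⟩).1 (by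
    rw [Complex.norm_def, Complex.normSq_mk, ← sq, ← sq, ← norm_sq_eq_fin_two, hu, one_pow,
      sqrt_one])
  refine ⟨φ, ?_⟩
  ext i
  fin_cases i
  · simpa using (congrArg Complex.re hφ).symm
  · simpa using (congrArg Complex.im hφ).symm

theorem inner_e2_cos_sin (θ φ : ℝ) : ⟪e2 (cos θ) (sin θ), e2 (cos φ) (sin φ)⟫ = cos (θ - φ) := by
  simp only [inner_eq_fin_two, e2_apply_zero, e2_apply_one, cos_sub]

theorem inner_e2_cos_sin_perp (θ φ : ℝ) :
    ⟪e2 (cos θ) (sin θ), perp (e2 (cos φ) (sin φ))⟫ = sin (θ - φ) := by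
  simp only [inner_eq_fin_two, perp, e2_apply_zero, e2_apply_one, sin_sub]; ring

theorem tanAngle_smul (u x : ℝ²) {t : ℝ} (ht : t ≠ 0) : tanAngle u (t • x) = tanAngle u x := by
  simp only [tanAngle, real_inner_smul_left, mul_div_mul_left _ _ ht]

theorem continuousOn_tanAngle {u : ℝ²} {A : Set ℝ²} (hA : ∀ x ∈ A, 0 < ⟪x, u⟫) :
    ContinuousOn (tanAngle u) A :=
  (continuous_id.inner continuous_const).continuousOn.div
    (continuous_id.inner continuous_const).continuousOn fun x hx => (hA x hx).ne'

theorem exists_nonneg_smul_mem_iff {u : ℝ²} (hu : ‖u‖ = 1) {A : Set ℝ²}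
    (hA : ∀ x ∈ A, 0 < ⟪x, u⟫) (w : ℝ²) :
    (∃ t : ℝ, 0 ≤ t ∧ t • w ∈ A) ↔ 0 < ⟪w, u⟫ ∧ tanAngle u w ∈ tanAngle u '' A := by
  constructor
  · rintro ⟨t, ht, hwA⟩
    have hpos := hA _ hwA
    rw [real_inner_smul_left] at hpos
    have ht0 : t ≠ 0 := by rintro rfl; simp at hpos
    exact ⟨pos_of_mul_pos_right hpos ht, t • w, hwA, tanAngle_smul u w ht0⟩
  · rintro ⟨hw, x, hx, hxw⟩
    refine ⟨⟪x, u⟫ / ⟪w, u⟫, div_nonneg (hA x hx).le hw.le, ?_⟩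
    convert hx using 1
    apply eq_of_inner_eq_of_inner_perp_eq hu
    · rw [real_inner_smul_left, div_mul_cancel₀ _ hw.ne']
    · rw [real_inner_smul_left, (div_eq_iff (hA x hx).ne').1 hxw, tanAngle]
      ring

theorem angleOfVision_eq_arctan_sub_arctan {u : ℝ²} (hu : ‖u‖ = 1) {A : Set ℝ²}
    (hAconv : Convex ℝ A) (hA : ∀ x ∈ A, 0 < ⟪x, u⟫) {m M : ℝ}
    (hm : IsLeast (tanAngle u '' A) m) (hM : IsGreatest (tanAngle u '' A) M) :
    angleOfVision A = arctan M - arctan m := by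
  have himage : tanAngle u '' A = Icc m M :=
    Subset.antisymm (fun z hz => ⟨hm.2 hz, hM.2 hz⟩)
      ((hAconv.isPreconnected.image _ (continuousOn_tanAngle hA)).Icc_subset hm.1 hM.1)
  have hmM : arctan m ≤ arctan M := arctan_le_arctan_iff.2 (hm.2 hM.1)
  obtain ⟨φ, rfl⟩ := exists_eq_e2_cos_sin hu
  have hset : {θ : ℝ | θ ∈ Ico 0 (2 * π) ∧ ∃ t : ℝ, 0 ≤ t ∧ t • e2 (cos θ) (sin θ) ∈ A} =
      {θ : ℝ | θ ∈ Ico 0 (2 * π) ∧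
        ∃ k : ℤ, θ - 2 * π * k ∈ Icc (arctan m + φ) (arctan M + φ)} := by
    ext θ
    refine and_congr_right fun _ => ?_
    rw [exists_nonneg_smul_mem_iff hu hA, himage, tanAngle, inner_e2_cos_sin,
      inner_e2_cos_sin_perp, ← tan_eq_sin_div_cos, cos_pos_and_tan_mem_Icc_iff]
    simp only [sub_right_comm θ φ, sub_mem_Icc_iff_left]
  rw [angleOfVision, hset, volume_setOf_mem_Ico_and_exists_sub_mul_mem_Icc two_pi_pos
    (by linarith [arctan_lt_pi_div_two M, neg_pi_div_two_lt_arctan m, pi_pos]),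
    ENNReal.toReal_ofReal (by linarith)]
  ring

theorem widthOrth_vadd (u x : ℝ²) (L : Set ℝ²) : widthOrth u (x +ᵥ L) = widthOrth u L := by
  unfold widthOrth
  congr 1
  ext z
  simpa [mem_vadd_set] using exists_comm

theorem widthOrth_eq_sub {u : ℝ²} {L : Set ℝ²} {B b : ℝ}
    (hB : IsGreatest ((⟪·, perp u⟫) '' L) B) (hb : IsLeast ((⟪·, perp u⟫) '' L) b) :
    widthOrth u L = B - b := by
  simp only [widthOrth, inner_sub_left]
  exact (isGreatest_image_prod_sub hB hb).csSup_eq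

theorem abs_inner_smul_add_sub_le {u : ℝ²} (hu : ‖u‖ = 1) (r : ℝ) (y : ℝ²) :
    |⟪r • u + y, u⟫ - r| ≤ ‖y‖ ∧ |⟪r • u + y, perp u⟫| ≤ ‖y‖ := by
  rw [inner_add_left, inner_add_left, real_inner_smul_left, real_inner_smul_left,
    real_inner_self_eq_norm_sq, hu, inner_self_perp]
  constructor
  · simpa using abs_real_inner_le_norm y u |>.trans_eq (by rw [hu, mul_one])
  · simpa using abs_real_inner_le_norm y (perp u) |>.trans_eq (by rw [norm_perp, hu, mul_one])

theorem abs_mul_angleOfVision_sub_widthOrth_le {u : ℝ²} (hu : ‖u‖ = 1) {A : Set ℝ²}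
    (hAconv : Convex ℝ A) (hAc : IsCompact A) {r D : ℝ} (hr : 0 < r) (hDr : 2 * D ≤ r)
    (hbound : ∀ x ∈ A, |⟪x, u⟫ - r| ≤ D ∧ |⟪x, perp u⟫| ≤ D) (hru : r • u ∈ A) :
    |r * angleOfVision A - widthOrth u A| ≤ 4 * D ^ 2 / r := by
  have hpos : ∀ x ∈ A, 0 < ⟪x, u⟫ := fun x hx => by
    have := (abs_le.1 (hbound x hx).1).1
    have := (abs_nonneg _).trans (hbound x hx).2
    linarith
  have hne : A.Nonempty := ⟨_, hru⟩
  have h0 : (0 : ℝ) ∈ (⟪·, perp u⟫) '' A :=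
    ⟨_, hru, show ⟪r • u, perp u⟫ = 0 by rw [real_inner_smul_left, inner_self_perp, mul_zero]⟩
  have hK := hAc.image_of_continuousOn (continuousOn_tanAngle hpos)
  have hKv : IsCompact ((⟪·, perp u⟫) '' A) := hAc.image (by fun_prop)
  obtain ⟨M, hM⟩ := hK.exists_isGreatest (hne.image _)
  obtain ⟨m, hm⟩ := hK.exists_isLeast (hne.image _)
  obtain ⟨B, hB⟩ := hKv.exists_isGreatest (hne.image _)
  obtain ⟨b, hb⟩ := hKv.exists_isLeast (hne.image _)
  rw [angleOfVision_eq_arctan_sub_arctan hu hAconv hpos hm hM, widthOrth_eq_sub hB hb]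
  have hu_bound := fun x hx => (hbound x hx).1
  have hv_bound := fun x hx => (hbound x hx).2
  calc |r * (arctan M - arctan m) - (B - b)| = |(r * arctan M - B) - (r * arctan m - b)| := by
        ring_nf
    _ ≤ 2 * D ^ 2 / r + 2 * D ^ 2 / r := (abs_sub _ _).trans (add_le_add
        (abs_mul_arctan_sub_le_of_isGreatest hr hDr hu_bound hv_bound h0 hB hM)
        (abs_mul_arctan_sub_le_of_isLeast hr hDr hu_bound hv_bound h0 hb hm))
    _ = 4 * D ^ 2 / r := by ring

/-- `r·Ψ(ru + L) → W_u(L)` as `r → ∞`, uniformly over unit vectors `u` and over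
convex bodies `L` of diameter `≤ D` containing the origin. -/
theorem angle_of_vision_asymptotics (D : ℝ) (hD : 0 < D) :
    ∀ ε > 0, ∃ r₀ : ℝ, ∀ r ≥ r₀, ∀ u : EuclideanSpace ℝ (Fin 2), ‖u‖ = 1 →
      ∀ L : Set (EuclideanSpace ℝ (Fin 2)), Convex ℝ L → IsCompact L → 0 ∈ L →
        Metric.diam L ≤ D →
        |r * angleOfVision ((r • u) +ᵥ L) - widthOrth u L| ≤ ε := by
  intro ε hε
  refine ⟨max (2 * D) (4 * D ^ 2 / ε), fun r hr u hu L hLconv hLc h0L hdiam => ?_⟩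
  have hDr : 2 * D ≤ r := le_of_max_le_left hr
  have hr0 : 0 < r := by linarith
  have hbound : ∀ x ∈ (r • u) +ᵥ L, |⟪x, u⟫ - r| ≤ D ∧ |⟪x, perp u⟫| ≤ D := by
    rintro _ ⟨y, hy, rfl⟩
    have hyD : ‖y‖ ≤ D := by
      simpa using (Metric.dist_le_diam_of_mem hLc.isBounded hy h0L).trans hdiam
    obtain ⟨h1, h2⟩ := abs_inner_smul_add_sub_le hu r y
    exact ⟨h1.trans hyD, h2.trans hyD⟩
  have hru : r • u ∈ (r • u) +ᵥ L := by simpa using vadd_mem_vadd_set (a := r • u) h0L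
  rw [← widthOrth_vadd u (r • u) L]
  calc _ ≤ 4 * D ^ 2 / r := abs_mul_angleOfVision_sub_widthOrth_le hu (hLconv.vadd _)
        (hLc.image (continuous_const_vadd (r • u))) hr0 hDr hbound hru
    _ ≤ ε := by
      rw [div_le_iff₀ hr0]
      linarith [(div_le_iff₀ hε).1 (le_of_max_le_right hr)]
end

section
/- If μ₁ and μ₂ are probability measures on [0,1/2] with μ₁ ≤ μ₂ in the convex order (∫ f dμ₁ ≤ ∫ f dμ₂ for all convex f), then for every n the probability of covering the circle of perimeter 1 by n i.i.d. uniformly-centered arcs with lengths distributed as μ₁ is at most the corresponding covering probability for μ₂: P(μ₁, n) ≤ P(μ₂, n). -/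
open MeasureTheory

/-- `n` arcs on the circle of perimeter `1`, the `i`-th with left endpoint (center) `c i` and
normalized length `ℓ i`, cover the whole circle. -/
def coversCircle {n : ℕ} (c : Fin n → AddCircle (1:ℝ)) (ℓ : Fin n → ℝ) : Prop :=
  ∀ x : AddCircle (1:ℝ), ∃ i : Fin n, ∃ t : ℝ, t ∈ Set.Icc 0 (ℓ i) ∧
    x = c i + (t : AddCircle (1:ℝ))

/-- `P(ν, n)`: the probability that `n` i.i.d. arcs with independent uniformly distributed
positions, whose normalized lengths are i.i.d. with law `ν`, cover the circle of perimeter 1. -/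
noncomputable def coverProb (ν : Measure ℝ) [SigmaFinite ν] (n : ℕ) : ℝ :=
  ((Measure.pi fun _ : Fin n => (volume : Measure (AddCircle (1:ℝ))).prod ν)
    {p | coversCircle (fun i => (p i).1) (fun i => (p i).2)}).toReal

/-!
Condition on all arcs but one. Given the others, with uncovered set `K`, the remaining arc
`[c, c + ℓ]` completes a covering exactly when it contains `K`. Measured from a point of `K`,
the set of such positions `c` is, up to a single point, an interval of length `(ℓ - m)⁺`, where
`m` depends only on `K` as long as `ℓ ≤ 1/2`. Its measure is therefore convex in `ℓ` on
`[0, 1/2]`, and so is its average over the other arcs: replacing the law of one length by a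
larger one in the convex order cannot decrease the covering probability. Replacing the `n` laws
one at a time gives the theorem.
-/

open Set Function

noncomputable section

namespace CircleCovering

def ConvexOrderLE (s : Set ℝ) (μ₁ μ₂ : Measure ℝ) : Prop :=
  ∀ f : ℝ → ℝ, ConvexOn ℝ s f → Integrable f μ₁ → Integrable f μ₂ → ∫ x, f x ∂μ₁ ≤ ∫ x, f x ∂μ₂

theorem le_of_forall_update_le {ι β γ : Type*} [Fintype ι] [DecidableEq ι] [Preorder γ]
    (F : (ι → β) → γ) {a b : β} (h : ∀ ν i, F (update ν i a) ≤ F (update ν i b)) :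
    F (fun _ => a) ≤ F (fun _ => b) := by
  suffices ∀ s : Finset ι, F (fun _ => a) ≤ F (s.piecewise (fun _ => b) (fun _ => a)) by
    simpa using this Finset.univ
  intro s
  induction s using Finset.induction_on with
  | empty => simp
  | insert i s hi ih =>
    calc F (fun _ => a) ≤ F (s.piecewise (fun _ => b) (fun _ => a)) := ih
      _ = F (update (s.piecewise (fun _ => b) (fun _ => a)) i a) := by
        rw [update_eq_self_iff.2 (Finset.piecewise_eq_of_notMem _ _ _ hi).symm]
      _ ≤ F (update (s.piecewise (fun _ => b) (fun _ => a)) i b) := h _ i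
      _ = F ((insert i s).piecewise (fun _ => b) (fun _ => a)) := by
        rw [Finset.piecewise_insert]

theorem convexOn_integral {E Ω : Type*} [AddCommGroup E] [Module ℝ E] [MeasurableSpace Ω]
    {P : Measure Ω} {s : Set E} {F : E → Ω → ℝ} (hs : Convex ℝ s)
    (hF : ∀ ω, ConvexOn ℝ s (F · ω)) (hint : ∀ x ∈ s, Integrable (F x) P) :
    ConvexOn ℝ s fun x => ∫ ω, F x ω ∂P := by
  refine ⟨hs, fun x hx y hy a b ha hb hab => ?_⟩
  calc ∫ ω, F (a • x + b • y) ω ∂P ≤ ∫ ω, (a • F x ω + b • F y ω) ∂P :=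
        integral_mono (hint _ (hs hx hy ha hb hab))
          (((hint x hx).smul a).add ((hint y hy).smul b)) fun ω => (hF ω).2 hx hy ha hb hab
    _ = a • ∫ ω, F x ω ∂P + b • ∫ ω, F y ω ∂P := by
        rw [integral_add (f := fun ω => a • F x ω) (g := fun ω => b • F y ω)
          ((hint x hx).smul a) ((hint y hy).smul b), integral_smul, integral_smul]

theorem integrable_measureReal {Y Z : Type*} [MeasurableSpace Y] [MeasurableSpace Z]
    {μ : Measure Y} [IsFiniteMeasure μ] (ρ : Measure Z) [IsFiniteMeasure ρ] {S : Y → Set Z}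
    (hS : Measurable fun y => ρ (S y)) : Integrable (fun y => ρ.real (S y)) μ :=
  .of_bound hS.ennreal_toReal.aestronglyMeasurable (ρ.real univ) (ae_of_all _ fun _ => by
    rw [Real.norm_of_nonneg measureReal_nonneg]; exact measureReal_mono (subset_univ _))

section Fubini

variable {X Ω : Type*} [MeasurableSpace X] [MeasurableSpace Ω] (α : Measure X) (P : Measure Ω)
  [IsFiniteMeasure α] [IsFiniteMeasure P] {E : Set ((X × ℝ) × Ω)}

theorem measurable_measure_prod_section (hE : MeasurableSet E) :
    Measurable fun ℓ => (α.prod P) {q | ((q.1, ℓ), q.2) ∈ E} :=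
  measurable_measure_prodMk_left (s := {p : ℝ × (X × Ω) | ((p.2.1, p.1), p.2.2) ∈ E})
    (hE.preimage (by fun_prop))

theorem measureReal_prod_prod_eq_integral (μ : Measure ℝ) [IsFiniteMeasure μ]
    (hE : MeasurableSet E) :
    ((α.prod μ).prod P).real E = ∫ ℓ, (α.prod P).real {q | ((q.1, ℓ), q.2) ∈ E} ∂μ := by
  have hf : Measurable fun z : X × ℝ => P (Prod.mk z ⁻¹' E) := measurable_measure_prodMk_left hE
  have hsec : ∀ ℓ, MeasurableSet {q : X × Ω | ((q.1, ℓ), q.2) ∈ E} :=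
    fun ℓ => hE.preimage (by fun_prop)
  simp only [measureReal_def]
  rw [integral_toReal (measurable_measure_prod_section α P hE).aemeasurable
      (ae_of_all _ fun _ => measure_lt_top _ _),
    Measure.prod_apply hE, lintegral_prod _ hf.aemeasurable,
    lintegral_lintegral_swap hf.aemeasurable]
  simp_rw [Measure.prod_apply (hsec _)]
  rfl

theorem measureReal_prod_eq_integral (hE : MeasurableSet E) (ℓ : ℝ) :
    (α.prod P).real {q | ((q.1, ℓ), q.2) ∈ E} = ∫ ω, α.real {x | ((x, ℓ), ω) ∈ E} ∂P := by
  have hsec : MeasurableSet {q : X × Ω | ((q.1, ℓ), q.2) ∈ E} := hE.preimage (by fun_prop)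
  simp only [measureReal_def]
  rw [Measure.prod_apply_symm hsec, integral_toReal (f := fun ω => α {x | ((x, ℓ), ω) ∈ E})
    (measurable_measure_prodMk_right hsec).aemeasurable (ae_of_all _ fun _ => measure_lt_top _ _)]
  rfl

theorem measureReal_prod_prod_le {s : Set ℝ} (hs : Convex ℝ s) {μ₁ μ₂ : Measure ℝ}
    [IsFiniteMeasure μ₁] [IsFiniteMeasure μ₂] (hμ : ConvexOrderLE s μ₁ μ₂)
    (hE : MeasurableSet E) (hconv : ∀ ω, ConvexOn ℝ s fun ℓ => α.real {x | ((x, ℓ), ω) ∈ E}) :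
    ((α.prod μ₁).prod P).real E ≤ ((α.prod μ₂).prod P).real E := by
  have hint : ∀ ℓ, Integrable (fun ω => α.real {x | ((x, ℓ), ω) ∈ E}) P := fun ℓ =>
    integrable_measureReal α (measurable_measure_prodMk_right
      (s := {q : X × Ω | ((q.1, ℓ), q.2) ∈ E}) (hE.preimage (by fun_prop)))
  have hg : ConvexOn ℝ s fun ℓ => (α.prod P).real {q | ((q.1, ℓ), q.2) ∈ E} :=
    (convexOn_integral hs hconv fun ℓ _ => hint ℓ).congr
      fun ℓ _ => (measureReal_prod_eq_integral α P hE ℓ).symm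
  rw [measureReal_prod_prod_eq_integral α P μ₁ hE, measureReal_prod_prod_eq_integral α P μ₂ hE]
  exact hμ _ hg (integrable_measureReal _ (measurable_measure_prod_section α P hE))
    (integrable_measureReal _ (measurable_measure_prod_section α P hE))

theorem measureReal_pi_update_le {n : ℕ} (ν : Fin (n + 1) → ProbabilityMeasure ℝ)
    (i : Fin (n + 1)) {s : Set ℝ} (hs : Convex ℝ s) {μ₁ μ₂ : ProbabilityMeasure ℝ}
    (hμ : ConvexOrderLE s μ₁ μ₂) {S : Set (Fin (n + 1) → X × ℝ)} (hS : MeasurableSet S)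
    (hconv : ∀ ω : Fin n → X × ℝ, ConvexOn ℝ s fun ℓ => α.real {x | i.insertNth (x, ℓ) ω ∈ S}) :
    (Measure.pi fun j => α.prod (update ν i μ₁ j : Measure ℝ)).real S ≤
      (Measure.pi fun j => α.prod (update ν i μ₂ j : Measure ℝ)).real S := by
  set e := MeasurableEquiv.piFinSuccAbove (fun _ => X × ℝ) i
  have split : ∀ μ : ProbabilityMeasure ℝ,
      (Measure.pi fun j => α.prod (update ν i μ j : Measure ℝ)).real S =
        ((α.prod μ).prod (Measure.pi fun j => α.prod (ν (i.succAbove j)))).real (e.symm ⁻¹' S) := by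
    intro μ
    have h := (measurePreserving_piFinSuccAbove (fun j => α.prod (update ν i μ j : Measure ℝ))
      i).measure_preimage_equiv (e.symm ⁻¹' S)
    simp only [update_self, update_of_ne (Fin.succAbove_ne i _)] at h
    rw [measureReal_def, measureReal_def, ← h, ← preimage_comp, e.symm_comp_self, preimage_id]
  rw [split, split]
  exact measureReal_prod_prod_le α _ hs hμ (e.symm.measurable hS) hconv

end Fubini

section Gap

variable {R : Set ℝ} {ℓ : ℝ}

theorem fract_add_le_iff {r u : ℝ} (hr : r ∈ Ico (0 : ℝ) 1) (hu : 0 ≤ u) (huℓ : u ≤ ℓ)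
    (hℓ : ℓ < 1) : Int.fract (r + u) ≤ ℓ ↔ r + u ≤ ℓ ∨ 1 ≤ r + u := by
  rcases lt_or_ge (r + u) 1 with h | h
  · rw [Int.fract_eq_self.2 ⟨by linarith [hr.1], h⟩]
    exact ⟨Or.inl, fun h' => h'.resolve_right h.not_ge⟩
  · have : Int.fract (r + u) = r + u - 1 :=
      Int.fract_eq_iff.2 ⟨by linarith, by linarith [hr.2], 1, by simp⟩
    rw [this]
    exact ⟨fun _ => Or.inr h, fun _ => by linarith [hr.2]⟩

/- Think of `R` as the positions, measured from a point `x₀ ∈ K`, of the points of a set `K` on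
the circle: those within half a turn ahead of `x₀` reach up to `forwardReach R`, the others lie
at most `backwardReach R` behind `x₀`. -/
def forwardReach (R : Set ℝ) : ℝ := sSup (R ∩ Iic (1 / 2))

def backwardReach (R : Set ℝ) : ℝ := sSup ((fun r => 1 - r) '' (R ∩ Ioi (1 / 2)))

theorem le_forwardReach {r : ℝ} (hr : r ∈ R) (h : r ≤ 1 / 2) : r ≤ forwardReach R :=
  le_csSup ⟨1 / 2, fun _ hx => hx.2⟩ ⟨hr, h⟩

theorem one_sub_le_backwardReach {r : ℝ} (hr : r ∈ R) (h : 1 / 2 < r) :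
    1 - r ≤ backwardReach R :=
  le_csSup ⟨1 / 2, by rintro _ ⟨x, ⟨-, hx⟩, rfl⟩; linarith [mem_Ioi.1 hx]⟩
    (mem_image_of_mem _ ⟨hr, h⟩)

theorem forwardReach_nonneg (hR : R ⊆ Ico 0 1) : 0 ≤ forwardReach R :=
  Real.sSup_nonneg fun _ hx => (hR hx.1).1

theorem backwardReach_nonneg (hR : R ⊆ Ico 0 1) : 0 ≤ backwardReach R :=
  Real.sSup_nonneg <| by rintro _ ⟨x, ⟨hx, -⟩, rfl⟩; linarith [(hR hx).2]

theorem Ioo_subset_setOf_fract_add_le (hR : R ⊆ Ico 0 1) (hℓ : ℓ ≤ 1 / 2) :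
    Ioo (backwardReach R) (ℓ - forwardReach R) ⊆
      {u ∈ Ico (0 : ℝ) 1 | ∀ r ∈ R, Int.fract (r + u) ≤ ℓ} := by
  rintro u ⟨hbu, hua⟩
  have hu0 : 0 ≤ u := (backwardReach_nonneg hR).trans hbu.le
  have huℓ : u ≤ ℓ := by linarith [forwardReach_nonneg hR]
  refine ⟨⟨hu0, by linarith⟩, fun r hr => (fract_add_le_iff (hR hr) hu0 huℓ (by linarith)).2 ?_⟩
  rcases le_or_gt r (1 / 2) with h | h
  · exact Or.inl (by linarith [le_forwardReach hr h])
  · exact Or.inr (by linarith [one_sub_le_backwardReach hr h])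

-- The exceptional point `u = ℓ` is needed only when `ℓ = 1/2 ∈ R`.
theorem setOf_fract_add_le_subset (hR : R ⊆ Ico 0 1) (h0 : 0 ∈ R) (hℓ : ℓ ≤ 1 / 2) :
    {u ∈ Ico (0 : ℝ) 1 | ∀ r ∈ R, Int.fract (r + u) ≤ ℓ} ⊆
      Icc (backwardReach R) (ℓ - forwardReach R) ∪ {ℓ} := by
  rintro u ⟨hu, hcov⟩
  have huℓ : u ≤ ℓ := by simpa [Int.fract_eq_self.2 hu] using hcov 0 h0
  have hcov' : ∀ r ∈ R, r + u ≤ ℓ ∨ 1 ≤ r + u := fun r hr =>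
    (fract_add_le_iff (hR hr) hu.1 huℓ (by linarith)).1 (hcov r hr)
  rcases huℓ.eq_or_lt with rfl | huℓ
  · exact Or.inr rfl
  refine Or.inl ⟨Real.sSup_le ?_ hu.1, ?_⟩
  · rintro _ ⟨r, ⟨hr, h⟩, rfl⟩
    have := (hcov' r hr).resolve_left (by linarith [mem_Ioi.1 h, hu.1])
    linarith
  · have : forwardReach R ≤ ℓ - u := Real.sSup_le (fun r ⟨hr, h⟩ =>
      by linarith [(hcov' r hr).resolve_right (by linarith [mem_Iic.1 h])]) (by linarith)
    linarith

theorem volume_eq_of_Ioo_subset_of_subset_Icc_union {s : Set ℝ} {x y z : ℝ}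
    (h₁ : Ioo x y ⊆ s) (h₂ : s ⊆ Icc x y ∪ {z}) : volume s = ENNReal.ofReal (y - x) := by
  refine le_antisymm ?_ (by simpa using measure_mono (μ := volume) h₁)
  calc volume s ≤ volume (Icc x y ∪ {z}) := measure_mono h₂
    _ ≤ volume (Icc x y) + volume ({z} : Set ℝ) := measure_union_le _ _
    _ = ENNReal.ofReal (y - x) := by simp

theorem exists_volume_setOf_fract_add_le (hR : R ⊆ Ico 0 1) (h0 : 0 ∈ R) :
    ∃ m, ∀ ℓ ∈ Icc (0 : ℝ) (1 / 2),
      volume {u ∈ Ico (0 : ℝ) 1 | ∀ r ∈ R, Int.fract (r + u) ≤ ℓ} = ENNReal.ofReal (ℓ - m) :=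
  ⟨forwardReach R + backwardReach R, fun ℓ hℓ => by
    rw [volume_eq_of_Ioo_subset_of_subset_Icc_union (Ioo_subset_setOf_fract_add_le hR hℓ.2)
      (setOf_fract_add_le_subset hR h0 hℓ.2)]
    ring_nf⟩

end Gap

def rep (z : UnitAddCircle) : ℝ := AddCircle.equivIco 1 0 z

theorem rep_coe (y : ℝ) : rep y = Int.fract y := by simp [rep]

theorem coe_rep (z : UnitAddCircle) : (rep z : UnitAddCircle) = z :=
  (AddCircle.equivIco 1 0).symm_apply_apply z

theorem rep_mem_Ico (z : UnitAddCircle) : rep z ∈ Ico 0 1 := by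
  induction z using QuotientAddGroup.induction_on with
  | H y => exact rep_coe y ▸ ⟨Int.fract_nonneg y, Int.fract_lt_one y⟩

theorem measurable_rep : Measurable rep :=
  measurable_subtype_coe.comp (AddCircle.measurableEquivIco 1 0).measurable

def arc (c : UnitAddCircle) (ℓ : ℝ) : Set UnitAddCircle := (fun t : ℝ => c + t) '' Icc 0 ℓ

theorem mem_arc_iff {x c : UnitAddCircle} {ℓ : ℝ} : x ∈ arc c ℓ ↔ rep (x - c) ≤ ℓ := by
  constructor
  · rintro ⟨t, ⟨ht0, htℓ⟩, rfl⟩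
    rw [add_sub_cancel_left, rep_coe]
    have : (0 : ℝ) ≤ ⌊t⌋ := Int.cast_nonneg (Int.floor_nonneg.2 ht0)
    linarith [Int.self_sub_fract t]
  · exact fun h => ⟨rep (x - c), ⟨(rep_mem_Ico _).1, h⟩, by
      simp only [coe_rep, add_sub_cancel]⟩

theorem isClosed_arc (c : UnitAddCircle) (ℓ : ℝ) : IsClosed (arc c ℓ) :=
  (isCompact_Icc.image (by fun_prop)).isClosed

theorem coversCircle_iff {n : ℕ} (c : Fin n → UnitAddCircle) (ℓ : Fin n → ℝ) :
    coversCircle c ℓ ↔ ∀ x, ∃ i, x ∈ arc (c i) (ℓ i) := by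
  simp [coversCircle, arc, eq_comm]

def coverEvent (n : ℕ) : Set (Fin n → UnitAddCircle × ℝ) :=
  {p | coversCircle (fun i => (p i).1) (fun i => (p i).2)}

theorem measurableSet_coverEvent (n : ℕ) : MeasurableSet (coverEvent n) := by
  obtain ⟨D, hDc, hDd⟩ := TopologicalSpace.exists_countable_dense UnitAddCircle
  have hD : coverEvent n = ⋂ x ∈ D, ⋃ i, {p | x ∈ arc (p i).1 (p i).2} := by
    ext p
    have hU := isClosed_iUnion_of_finite fun i => isClosed_arc (p i).1 (p i).2
    have hDU : D ⊆ ⋃ i, arc (p i).1 (p i).2 ↔ univ ⊆ ⋃ i, arc (p i).1 (p i).2 := by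
      rw [← hU.closure_subset_iff, hDd.closure_eq]
    simpa [coverEvent, coversCircle_iff, subset_def] using hDU.symm
  rw [hD]
  refine .biInter hDc fun x _ => .iUnion fun i => ?_
  simp only [mem_arc_iff]
  exact measurableSet_le (measurable_rep.comp (by fun_prop)) (by fun_prop)

def coveringPositions (K : Set UnitAddCircle) (ℓ : ℝ) : Set UnitAddCircle := {c | K ⊆ arc c ℓ}

theorem isClosed_coveringPositions (K : Set UnitAddCircle) (ℓ : ℝ) :
    IsClosed (coveringPositions K ℓ) := by
  have h : ∀ x, {c | x ∈ arc c ℓ} = (fun t : ℝ => x - t) '' Icc 0 ℓ := fun x => by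
    ext c
    simp only [arc, mem_ofPred_eq, mem_image]
    exact exists_congr fun t => and_congr_right fun _ => by
      rw [sub_eq_iff_eq_add', eq_comm, add_comm]
  simpa only [coveringPositions, subset_def, ofPred_forall, h] using
    isClosed_biInter fun x _ => (isCompact_Icc.image (by fun_prop)).isClosed

theorem volume_coveringPositions (K : Set UnitAddCircle) (x₀ : UnitAddCircle) (ℓ : ℝ) :
    volume (coveringPositions K ℓ) =
      volume {u ∈ Ico (0 : ℝ) 1 | ∀ r ∈ (fun x => rep (x - x₀)) '' K, Int.fract (r + u) ≤ ℓ} := by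
  have hmeas := (isClosed_coveringPositions K ℓ).measurableSet
  have hpre : ((↑) : ℝ → UnitAddCircle) ⁻¹' ((x₀ - ·) ⁻¹' coveringPositions K ℓ) ∩ Ico 0 1 =
      {u ∈ Ico (0 : ℝ) 1 | ∀ r ∈ (fun x => rep (x - x₀)) '' K, Int.fract (r + u) ≤ ℓ} := by
    ext u
    have hshift : ∀ x : UnitAddCircle, x - (x₀ - u) = ((rep (x - x₀) + u : ℝ) : UnitAddCircle) :=
      fun x => by rw [AddCircle.coe_add, coe_rep]; abel
    simp only [mem_inter_iff, mem_preimage, coveringPositions, subset_def, mem_ofPred_eq,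
      mem_arc_iff, hshift, rep_coe, forall_mem_image, and_comm]
  calc volume (coveringPositions K ℓ) = volume ((x₀ - ·) ⁻¹' coveringPositions K ℓ) :=
        ((Measure.measurePreserving_sub_left volume x₀).measure_preimage
          hmeas.nullMeasurableSet).symm
    _ = (volume : Measure ℝ).restrict (Ioc 0 (0 + 1))
          (((↑) : ℝ → UnitAddCircle) ⁻¹' ((x₀ - ·) ⁻¹' coveringPositions K ℓ)) :=
        ((AddCircle.measurePreserving_mk 1 0).measure_preimage
          (hmeas.preimage (by fun_prop)).nullMeasurableSet).symm
    _ = _ := by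
      rw [zero_add, ← Measure.restrict_congr_set Ico_ae_eq_Ioc, Measure.restrict_apply
        (hmeas.preimage (by fun_prop) |>.preimage AddCircle.measurable_mk'), hpre]

theorem convexOn_volume_coveringPositions (K : Set UnitAddCircle) :
    ConvexOn ℝ (Icc 0 (1 / 2)) fun ℓ => volume.real (coveringPositions K ℓ) := by
  rcases K.eq_empty_or_nonempty with rfl | ⟨x₀, hx₀⟩
  · simpa [coveringPositions] using convexOn_const _ (convex_Icc (0 : ℝ) (1 / 2))
  obtain ⟨m, hm⟩ := exists_volume_setOf_fract_add_le (R := (fun x => rep (x - x₀)) '' K)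
    (by rintro _ ⟨x, -, rfl⟩; exact rep_mem_Ico _) ⟨x₀, hx₀, by simpa using rep_coe 0⟩
  have hconv : ConvexOn ℝ (Icc 0 (1 / 2)) fun ℓ : ℝ => max (ℓ - m) 0 :=
    ((convexOn_id (convex_Icc _ _)).sub (concaveOn_const m (convex_Icc _ _))).sup
      (convexOn_const 0 (convex_Icc _ _))
  refine hconv.congr fun ℓ hℓ => ?_
  rw [measureReal_def, volume_coveringPositions K x₀, hm ℓ hℓ, ENNReal.toReal_ofReal']

theorem insertNth_mem_coverEvent_iff {n : ℕ} (i : Fin (n + 1)) (c : UnitAddCircle) (ℓ : ℝ)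
    (ω : Fin n → UnitAddCircle × ℝ) :
    i.insertNth (c, ℓ) ω ∈ coverEvent (n + 1) ↔
      c ∈ coveringPositions {x | ∀ j, x ∉ arc (ω j).1 (ω j).2} ℓ := by
  simp only [coverEvent, coveringPositions, mem_ofPred_eq, coversCircle_iff,
    Fin.exists_iff_succAbove i, Fin.insertNth_apply_same, Fin.insertNth_apply_succAbove,
    subset_def, or_iff_not_imp_right, not_exists]

theorem measureReal_coverEvent_update_le {n : ℕ} (ν : Fin n → ProbabilityMeasure ℝ) (i : Fin n)
    {μ₁ μ₂ : ProbabilityMeasure ℝ} (hμ : ConvexOrderLE (Icc 0 (1 / 2)) μ₁ μ₂) :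
    (Measure.pi fun j => volume.prod (update ν i μ₁ j : Measure ℝ)).real (coverEvent n) ≤
      (Measure.pi fun j => volume.prod (update ν i μ₂ j : Measure ℝ)).real (coverEvent n) := by
  cases n with
  | zero => exact i.elim0
  | succ n =>
    refine measureReal_pi_update_le _ ν i (convex_Icc _ _) hμ (measurableSet_coverEvent _)
      fun ω => ?_
    simpa only [insertNth_mem_coverEvent_iff, ofPred_mem_eq] using
      convexOn_volume_coveringPositions _

end CircleCovering

open CircleCovering

theorem coverProb_mono_of_convex_order_general (μ₁ μ₂ : Measure ℝ)
    [IsProbabilityMeasure μ₁] [IsProbabilityMeasure μ₂]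
    (hcv : ∀ f : ℝ → ℝ, ConvexOn ℝ (Set.Icc (0:ℝ) (1/2)) f →
      Integrable f μ₁ → Integrable f μ₂ → ∫ x, f x ∂μ₁ ≤ ∫ x, f x ∂μ₂)
    (n : ℕ) : coverProb μ₁ n ≤ coverProb μ₂ n :=
  le_of_forall_update_le
    (fun ν : Fin n → ProbabilityMeasure ℝ =>
      (Measure.pi fun j => volume.prod (ν j : Measure ℝ)).real (coverEvent n))
    (a := ⟨μ₁, inferInstance⟩) (b := ⟨μ₂, inferInstance⟩)
    fun ν i => measureReal_coverEvent_update_le ν i hcv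

/-- the convex order on arc-length distributions on `[0,1/2]` implies the order
of covering probabilities: `μ₁ ≤_cv μ₂` implies `P(μ₁, n) ≤ P(μ₂, n)`. -/
theorem coverProb_mono_of_convex_order (μ₁ μ₂ : Measure ℝ)
    [IsProbabilityMeasure μ₁] [IsProbabilityMeasure μ₂]
    (h₁ : μ₁ (Set.Icc (0:ℝ) (1/2)) = 1) (h₂ : μ₂ (Set.Icc (0:ℝ) (1/2)) = 1)
    (hcv : ∀ f : ℝ → ℝ, ConvexOn ℝ (Set.Icc (0:ℝ) (1/2)) f →
      Integrable f μ₁ → Integrable f μ₂ → ∫ x, f x ∂μ₁ ≤ ∫ x, f x ∂μ₂)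
    (n : ℕ) : coverProb μ₁ n ≤ coverProb μ₂ n :=
  coverProb_mono_of_convex_order_general μ₁ μ₂ hcv n
end
end

section
/- For arcs of law ν_m = (1-2m)δ₀ + 2m δ_{1/2} on [0,1/2] (m ∈ (0,1/4]), the probability of NOT covering the circle of perimeter 1 by n such i.i.d. uniformly-centered arcs equals 2 n m (1-m)^{n-1} + (1-2m)^n. -/
open MeasureTheory

/-!
Almost surely every arc is a point or a half arc. If all arcs are points they miss all but
finitely many points of the circle. Otherwise the arcs fail to cover exactly when some half arc
`i` is *first*: every other half arc starts in the half-open half circle `[c i, c i + 1/2)`;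
then the gap after the end of the last half arc, minus the finitely many point arcs, is
uncovered. Breaking ties by
index makes the first half arc unique, so non-covering is the disjoint union of "no half arc",
of probability `(1 - p)^n` with `p = ν {1/2}`, and of the `n` events "arc `i` is first". Given
that arc `i` is a half arc, each other arc independently is a point or a half arc starting in the
half circle after `c i`, of probability `(1 - p) + p/2`, so each of these events has probability
`p (1 - p/2)^(n-1)`.
-/

open Set
open scoped ENNReal

local notation "𝕋" => AddCircle (1:ℝ)

theorem MeasureTheory.Measure.pi_setOf_mem_and_forall_ne {α : Type*} [MeasurableSpace α]
    (μ : Measure α) [SigmaFinite μ] {k : ℕ} (i : Fin (k + 1)) {H : Set α} (hH : MeasurableSet H)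
    {G : Fin (k + 1) → α → Set α} (hG : ∀ j, MeasurableSet {q : α × α | q.2 ∈ G j q.1})
    {r : ℝ≥0∞} (hr : ∀ j ≠ i, ∀ a ∈ H, μ (G j a) = r) :
    Measure.pi (fun _ => μ) {p | p i ∈ H ∧ ∀ j ≠ i, p j ∈ G j (p i)} = μ H * r ^ k := by
  classical
  set F : Set (α × (Fin k → α)) := {q | q.1 ∈ H ∧ ∀ l, q.2 l ∈ G (i.succAbove l) q.1}
  have hF : MeasurableSet F := by
    simp only [F, ofPred_and, ofPred_forall]
    exact (measurable_fst hH).inter <| .iInter fun l =>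
      (hG (i.succAbove l)).preimage
        (measurable_fst.prodMk ((measurable_pi_apply l).comp measurable_snd))
  have hpre : {p : Fin (k + 1) → α | p i ∈ H ∧ ∀ j ≠ i, p j ∈ G j (p i)} =
      MeasurableEquiv.piFinSuccAbove (fun _ => α) i ⁻¹' F := by
    ext p
    simp [F, Fin.forall_iff_succAbove i, Fin.removeNth_apply]
  have hslice (a : α) :
      Measure.pi (fun _ => μ) (Prod.mk a ⁻¹' F) = H.indicator (fun _ => r ^ k) a := by
    by_cases ha : a ∈ H
    · have : Prod.mk a ⁻¹' F = univ.pi fun l => G (i.succAbove l) a := by ext; simp [F, ha]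
      simp [this, Measure.pi_pi, ha, hr _ (Fin.succAbove_ne i _) a ha]
    · have : Prod.mk a ⁻¹' F = ∅ := by ext; simp [F, ha]
      simp [this, ha]
  rw [hpre, (measurePreserving_piFinSuccAbove (fun _ => μ) i).measure_preimage
    hF.nullMeasurableSet, Measure.prod_apply hF, lintegral_congr hslice,
    lintegral_indicator_const hH, mul_comm]

theorem MeasureTheory.Measure.prod_setOf_imp {α β : Type*} [MeasurableSpace α] [MeasurableSpace β]
    (μ : Measure α) [IsProbabilityMeasure μ] (ν : Measure β) [SFinite ν] {s : Set α} {t : Set β}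
    (hs : MeasurableSet s) (ht : MeasurableSet t) :
    μ.prod ν {w | w.2 ∈ t → w.1 ∈ s} = ν tᶜ + μ s * ν t := by
  have : {w : α × β | w.2 ∈ t → w.1 ∈ s} = univ ×ˢ tᶜ ∪ s ×ˢ t := by
    ext w; by_cases w.2 ∈ t <;> simp [*]
  rw [this, measure_union (disjoint_compl_left.set_prod_right _ _) (hs.prod ht),
    Measure.prod_prod, Measure.prod_prod, measure_univ, one_mul]

-- makes the Haar measure `volume` on the circle atomless
instance : Nontrivial 𝕋 :=
  ⟨⟨0, ((1/2 : ℝ) : 𝕋), by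
    rw [ne_comm, Ne, AddCircle.coe_eq_zero_iff_of_mem_Ico (by norm_num)]; norm_num⟩⟩

instance : IsProbabilityMeasure (volume : Measure 𝕋) :=
  ⟨by simp [AddCircle.measure_univ]⟩

noncomputable def circleFract (y : 𝕋) : ℝ := AddCircle.equivIco 1 0 y

lemma circleFract_coe (t : ℝ) : circleFract t = Int.fract t := by
  simp [circleFract, AddCircle.coe_equivIco_mk_apply]

lemma coe_circleFract (y : 𝕋) : ((circleFract y : ℝ) : 𝕋) = y :=
  AddCircle.coe_equivIco

lemma circleFract_mem_Ico (y : 𝕋) : circleFract y ∈ Ico 0 1 := by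
  simpa [circleFract] using (AddCircle.equivIco 1 0 y).2

lemma circleFract_coe_of_mem_Ico {t : ℝ} (ht : t ∈ Ico 0 1) : circleFract t = t := by
  rw [circleFract_coe, Int.fract_eq_self]; exact ht

lemma circleFract_eq_zero_iff {y : 𝕋} : circleFract y = 0 ↔ y = 0 := by
  refine ⟨fun h => by rw [← coe_circleFract y, h, AddCircle.coe_zero], ?_⟩
  rintro rfl
  simpa using circleFract_coe 0

lemma circleFract_pos_iff {y : 𝕋} : 0 < circleFract y ↔ y ≠ 0 := by
  rw [(circleFract_mem_Ico y).1.lt_iff_ne', Ne, circleFract_eq_zero_iff]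

lemma circleFract_sub_of_le {y z : 𝕋} (h : circleFract y ≤ circleFract z) :
    circleFract (z - y) = circleFract z - circleFract y := by
  rw [← coe_circleFract z, ← coe_circleFract y, ← AddCircle.coe_sub, circleFract_coe_of_mem_Ico,
    coe_circleFract, coe_circleFract]
  obtain ⟨hy, -⟩ := circleFract_mem_Ico y
  obtain ⟨-, hz⟩ := circleFract_mem_Ico z
  exact ⟨sub_nonneg.2 h, by linarith⟩

lemma circleFract_neg {y : 𝕋} (hy : y ≠ 0) : circleFract (-y) = 1 - circleFract y := by
  rw [← coe_circleFract y, ← AddCircle.coe_neg, circleFract_coe, circleFract_coe,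
    Int.fract_neg]
  rwa [← circleFract_coe, coe_circleFract, Ne, circleFract_eq_zero_iff]

@[fun_prop]
lemma measurable_circleFract : Measurable circleFract :=
  measurable_subtype_coe.comp (AddCircle.measurableEquivIco 1 0).measurable

lemma measurePreserving_circleFract :
    MeasurePreserving circleFract volume (volume.restrict (Ico 0 1)) := by
  refine ⟨measurable_circleFract, ?_⟩
  have hmk := AddCircle.measurePreserving_mk 1 0
  rw [zero_add, ← Measure.restrict_congr_set Ico_ae_eq_Ioc] at hmk
  rw [← hmk.map_eq, Measure.map_map measurable_circleFract hmk.measurable]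
  conv_rhs => rw [← Measure.map_id (μ := volume.restrict (Ico (0:ℝ) 1))]
  refine Measure.map_congr (ae_restrict_of_forall_mem measurableSet_Ico fun t ht => ?_)
  exact circleFract_coe_of_mem_Ico ht

lemma volume_setOf_circleFract_lt {a : ℝ} (h1 : a ≤ 1) :
    volume {y : 𝕋 | circleFract y < a} = ENNReal.ofReal a := by
  change volume (circleFract ⁻¹' Iio a) = _
  rw [measurePreserving_circleFract.measure_preimage measurableSet_Iio.nullMeasurableSet,
    Measure.restrict_apply measurableSet_Iio, inter_comm, Ico_inter_Iio, min_eq_right h1,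
    Real.volume_Ico, sub_zero]

lemma volume_setOf_circleFract_sub_lt_half_and (c : 𝕋) (b : Prop) :
    volume {x : 𝕋 | circleFract (x - c) < 1/2 ∧ (x = c → b)} = 2⁻¹ := by
  have : volume {x : 𝕋 | circleFract (x - c) < 1/2} = 2⁻¹ := by
    rw [show {x : 𝕋 | circleFract (x - c) < 1/2} = (· + -c) ⁻¹' {y | circleFract y < 1/2} by
      simp [sub_eq_add_neg], measure_preimage_add_right, volume_setOf_circleFract_lt (by norm_num),
      one_div, ENNReal.ofReal_inv_of_pos two_pos, ENNReal.ofReal_ofNat]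
  rw [← this]
  refine measure_congr (Filter.eventuallyEq_set.2 ?_)
  filter_upwards [Measure.ae_ne volume c] with x hx
  simp [hx]

lemma exists_mem_Icc_eq_add_iff {c x : 𝕋} {ℓ : ℝ} (hℓ : ℓ < 1) :
    (∃ t ∈ Icc 0 ℓ, x = c + t) ↔ circleFract (x - c) ≤ ℓ := by
  constructor
  · rintro ⟨t, ht, rfl⟩
    rw [add_sub_cancel_left, circleFract_coe_of_mem_Ico ⟨ht.1, ht.2.trans_lt hℓ⟩]
    exact ht.2
  · intro h
    exact ⟨_, ⟨(circleFract_mem_Ico _).1, h⟩, by rw [coe_circleFract, add_sub_cancel]⟩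

lemma coversCircle_iff {n : ℕ} {c : Fin n → 𝕋} {ℓ : Fin n → ℝ} (hℓ : ∀ i, ℓ i < 1) :
    coversCircle c ℓ ↔ ∀ x, ∃ i, circleFract (x - c i) ≤ ℓ i := by
  simp only [coversCircle, exists_mem_Icc_eq_add_iff (hℓ _)]

def IsFirstHalfArc {n : ℕ} (c : Fin n → 𝕋) (ℓ : Fin n → ℝ) (i : Fin n) : Prop :=
  ℓ i = 1/2 ∧ ∀ j ≠ i, ℓ j = 1/2 → circleFract (c j - c i) < 1/2 ∧ (c j = c i → i < j)

section Arcs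

variable {n : ℕ} {c : Fin n → 𝕋} {ℓ : Fin n → ℝ}

lemma IsFirstHalfArc.unique {i i' : Fin n} (hi : IsFirstHalfArc c ℓ i)
    (hi' : IsFirstHalfArc c ℓ i') : i = i' := by
  by_contra hne
  obtain ⟨hlt, htie⟩ := hi.2 i' (Ne.symm hne) hi'.1
  obtain ⟨hlt', htie'⟩ := hi'.2 i hne hi.1
  by_cases hc : c i' = c i
  · exact lt_asymm (htie hc) (htie' hc.symm)
  · rw [← neg_sub, circleFract_neg (sub_ne_zero.2 hc)] at hlt'
    linarith

lemma not_coversCircle_of_forall_eq_zero (hℓ : ∀ j, ℓ j = 0) : ¬ coversCircle c ℓ := by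
  rw [coversCircle_iff (by simp [hℓ])]
  obtain ⟨s, hs, hsc⟩ := ((Ico_infinite (zero_lt_one' ℝ)).sdiff
    (finite_range (circleFract ∘ c))).nonempty
  push Not
  refine ⟨s, fun j => ?_⟩
  rw [hℓ, circleFract_pos_iff, sub_ne_zero]
  intro hsj
  exact hsc ⟨j, by simp [← hsj, circleFract_coe_of_mem_Ico hs]⟩

lemma not_coversCircle_of_isFirstHalfArc (hℓ : ∀ j, ℓ j = 0 ∨ ℓ j = 1/2) {i : Fin n}
    (hi : IsFirstHalfArc c ℓ i) : ¬ coversCircle c ℓ := by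
  classical
  set u := fun j => circleFract (c j - c i)
  have hu : ∀ j, ℓ j = 1/2 → u j < 1/2 := fun j hj => by
    rcases eq_or_ne j i with rfl | hji
    · simp [u, circleFract_eq_zero_iff.2 rfl]
    · exact (hi.2 j hji hj).1
  obtain ⟨j₀, hj₀, hmax⟩ :=
    (Finset.univ.filter (ℓ · = 1/2)).exists_max_image u ⟨i, by simp [hi.1]⟩
  have hj₀ : u j₀ + 1/2 < 1 := by linarith [hu j₀ (Finset.mem_filter.1 hj₀).2]
  -- `c i + s` lies beyond the end of every half arc and is none of the point arcs
  obtain ⟨s, hs, hsu⟩ := ((Ioo_infinite hj₀).sdiff (finite_range u)).nonempty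
  have hs' : s ∈ Ico 0 1 := ⟨by linarith [hs.1, (circleFract_mem_Ico (c j₀ - c i)).1], hs.2⟩
  rw [coversCircle_iff fun j => by rcases hℓ j with h | h <;> rw [h] <;> norm_num]
  push Not
  refine ⟨c i + s, fun j => ?_⟩
  have hx : c i + s - c j = s - (c j - c i) := by abel
  rcases hℓ j with h | h
  · rw [h, circleFract_pos_iff, hx, sub_ne_zero]
    intro hsj
    exact hsu ⟨j, by simp [u, ← hsj, circleFract_coe_of_mem_Ico hs']⟩
  · have huj : u j ≤ u j₀ := hmax j (by simp [h])
    have hus : u j ≤ s := by linarith [hs.1]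
    rw [h, hx, circleFract_sub_of_le (by rwa [circleFract_coe_of_mem_Ico hs']),
      circleFract_coe_of_mem_Ico hs']
    linarith [hs.1]

lemma exists_isFirstHalfArc_of_not_coversCircle (hℓ : ∀ j, ℓ j = 0 ∨ ℓ j = 1/2)
    (hc : ¬ coversCircle c ℓ) (hhalf : ∃ j, ℓ j = 1/2) : ∃ i, IsFirstHalfArc c ℓ i := by
  classical
  rw [coversCircle_iff fun j => by rcases hℓ j with h | h <;> rw [h] <;> norm_num] at hc
  push Not at hc
  obtain ⟨x, hx⟩ := hc
  set w := fun j => circleFract (x - c j)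
  obtain ⟨j₁, hj₁⟩ := hhalf
  -- `i` maximises `w` among the half arcs, and has the smallest index among the maximisers
  obtain ⟨i, hi, hmin⟩ := (Finset.univ.filter (ℓ · = 1/2)).exists_min_image
    (fun j => toLex (-w j, j)) ⟨j₁, by simp [hj₁]⟩
  refine ⟨i, (Finset.mem_filter.1 hi).2, fun j hji hj => ?_⟩
  have hle := Prod.Lex.le_iff.1 (hmin j (by simp [hj]))
  simp only [ofLex_toLex, neg_lt_neg_iff, neg_inj] at hle
  have hwji : w j ≤ w i := hle.elim le_of_lt fun h => h.1.ge
  refine ⟨?_, fun hcji => ?_⟩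
  · rw [show c j - c i = (x - c i) - (x - c j) by abel, circleFract_sub_of_le hwji]
    linarith [hx j, hj, (circleFract_mem_Ico (x - c i)).2]
  · rcases hle with h | h
    · simp [w, hcji] at h
    · exact lt_of_le_of_ne h.2 (Ne.symm hji)

end Arcs

def noncoverEvent (n : ℕ) : Set (Fin n → 𝕋 × ℝ) :=
  {p | ∀ j, (p j).2 ≠ 1/2} ∪ ⋃ i, {p | IsFirstHalfArc (fun j => (p j).1) (fun j => (p j).2) i}

lemma measurableSet_isFirstHalfArc {n : ℕ} (i : Fin n) :
    MeasurableSet {p : Fin n → 𝕋 × ℝ | IsFirstHalfArc (fun j => (p j).1) (fun j => (p j).2) i} :=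
  measurableSet_setOfPred.2 (by unfold IsFirstHalfArc; fun_prop)

lemma measurableSet_noncoverEvent (n : ℕ) : MeasurableSet (noncoverEvent n) :=
  (measurableSet_setOfPred.2 (by fun_prop)).union (.iUnion measurableSet_isFirstHalfArc)

section ArcsLaw

variable {ν : Measure ℝ} [IsProbabilityMeasure ν]

lemma measure_pi_forall_ne_half (n : ℕ) :
    Measure.pi (fun _ : Fin n => (volume : Measure 𝕋).prod ν) {p | ∀ j, (p j).2 ≠ 1/2} =
      ν {1/2}ᶜ ^ n := by
  have : {p : Fin n → 𝕋 × ℝ | ∀ j, (p j).2 ≠ 1/2} = univ.pi fun _ => univ ×ˢ {1/2}ᶜ := by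
    ext; simp
  rw [this, Measure.pi_pi]
  simp [Measure.prod_prod]

lemma measure_pi_isFirstHalfArc {n : ℕ} (i : Fin n) :
    Measure.pi (fun _ : Fin n => (volume : Measure 𝕋).prod ν)
        {p | IsFirstHalfArc (fun j => (p j).1) (fun j => (p j).2) i} =
      ν {1/2} * (ν {1/2}ᶜ + 2⁻¹ * ν {1/2}) ^ (n - 1) := by
  obtain ⟨k, rfl⟩ := Nat.exists_eq_add_one_of_ne_zero i.pos.ne'
  have hhalf : MeasurableSet ({1/2} : Set ℝ) := measurableSet_singleton _
  refine (Measure.pi_setOf_mem_and_forall_ne _ i (measurable_snd hhalf)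
    (G := fun j a => {w | w.2 ∈ ({1/2} : Set ℝ) →
      w.1 ∈ {x | circleFract (x - a.1) < 1/2 ∧ (x = a.1 → i < j)}})
    (r := ν {1/2}ᶜ + 2⁻¹ * ν {1/2})
    (fun j => measurableSet_setOfPred.2 (by simp only [mem_ofPred_eq]; fun_prop))
    fun j _ a _ => ?_).trans ?_
  · rw [Measure.prod_setOf_imp _ _ (measurableSet_setOfPred.2 (by fun_prop)) hhalf,
      volume_setOf_circleFract_sub_lt_half_and]
  · rw [Nat.add_sub_cancel, (measurePreserving_snd (μ := (volume : Measure 𝕋))).measure_preimage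
      hhalf.nullMeasurableSet]

lemma coverSet_ae_eq_compl_noncoverEvent (hν : ∀ᵐ ℓ ∂ν, ℓ = 0 ∨ ℓ = 1/2) (n : ℕ) :
    {p : Fin n → 𝕋 × ℝ | coversCircle (fun i => (p i).1) (fun i => (p i).2)}
      =ᵐ[Measure.pi fun _ => (volume : Measure 𝕋).prod ν] ((noncoverEvent n)ᶜ : Set _) := by
  have hlen : ∀ᵐ p ∂(Measure.pi fun _ : Fin n => (volume : Measure 𝕋).prod ν),
      ∀ j, (p j).2 = 0 ∨ (p j).2 = 1/2 :=
    have hlen₁ : ∀ᵐ w ∂(volume : Measure 𝕋).prod ν, w.2 = 0 ∨ w.2 = 1/2 :=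
      Measure.quasiMeasurePreserving_snd.ae hν
    ae_all_iff.2 fun j =>
      (Measure.tendsto_eval_ae_ae (μ := fun _ : Fin n => _) (i := j)).eventually hlen₁
  refine Filter.eventuallyEq_set.2 ?_
  filter_upwards [hlen] with p hp
  simp only [noncoverEvent, mem_ofPred_eq, compl_union, mem_inter_iff, mem_compl_iff,
    mem_iUnion, not_exists]
  constructor
  · intro hcov
    refine ⟨fun h => not_coversCircle_of_forall_eq_zero (fun j => (hp j).resolve_right (h j)) hcov,
      fun i hi => not_coversCircle_of_isFirstHalfArc hp hi hcov⟩
  · rintro ⟨hhalf, hfirst⟩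
    by_contra hcov
    push Not at hhalf
    obtain ⟨i, hi⟩ := exists_isFirstHalfArc_of_not_coversCircle hp hcov hhalf
    exact hfirst i hi

lemma measure_pi_noncoverEvent (n : ℕ) :
    Measure.pi (fun _ : Fin n => (volume : Measure 𝕋).prod ν) (noncoverEvent n) =
      ν {1/2}ᶜ ^ n + n * (ν {1/2} * (ν {1/2}ᶜ + 2⁻¹ * ν {1/2}) ^ (n - 1)) := by
  rw [noncoverEvent, measure_union ?_ (.iUnion measurableSet_isFirstHalfArc),
    measure_iUnion ?_ measurableSet_isFirstHalfArc, tsum_fintype, measure_pi_forall_ne_half]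
  · simp [measure_pi_isFirstHalfArc]
  · exact fun i i' hii' => disjoint_left.2 fun p hi hi' =>
      hii' (IsFirstHalfArc.unique (c := fun j => (p j).1) (ℓ := fun j => (p j).2) hi hi')
  · exact disjoint_left.2 fun p hp hE => by
      obtain ⟨i, hi⟩ := mem_iUnion.1 hE
      exact hp i hi.1

theorem one_sub_coverProb_of_ae_eq_zero_or_half (hν : ∀ᵐ ℓ ∂ν, ℓ = 0 ∨ ℓ = 1/2) (n : ℕ) :
    1 - coverProb ν n =
      n * ν.real {1/2} * (1 - ν.real {1/2} / 2) ^ (n - 1) + (1 - ν.real {1/2}) ^ n := by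
  rw [coverProb, measure_congr (coverSet_ae_eq_compl_noncoverEvent hν n),
    prob_compl_eq_one_sub (measurableSet_noncoverEvent n),
    ENNReal.toReal_sub_of_le prob_le_one ENNReal.one_ne_top, measure_pi_noncoverEvent]
  have hcompl : ν.real {1/2}ᶜ = 1 - ν.real {1/2} :=
    probReal_compl_eq_one_sub (measurableSet_singleton _)
  rw [ENNReal.toReal_one, sub_sub_cancel, ENNReal.toReal_add (by finiteness) (by finiteness)]
  simp only [ENNReal.toReal_pow, ENNReal.toReal_mul, ENNReal.toReal_natCast]
  rw [ENNReal.toReal_add (by finiteness) (by finiteness)]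
  simp only [ENNReal.toReal_mul, ENNReal.toReal_inv, ENNReal.toReal_ofNat, ← measureReal_def,
    hcompl]
  ring

end ArcsLaw

theorem noncover_two_point_general (m : ℝ) (hm : m ∈ Set.Ioc (0:ℝ) (1/4)) (n : ℕ)
    (ν : Measure ℝ) [IsProbabilityMeasure ν]
    (hν : ν = ENNReal.ofReal (1 - 2*m) • Measure.dirac (0:ℝ)
        + ENNReal.ofReal (2*m) • Measure.dirac (1/2 : ℝ)) :
    1 - coverProb ν n = 2*n*m*(1-m)^(n-1) + (1-2*m)^n := by
  have hlen : ∀ᵐ ℓ ∂ν, ℓ = 0 ∨ ℓ = 1/2 := by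
    rw [hν, ae_add_measure_iff]
    exact ⟨Measure.ae_smul_measure (by simp) _, Measure.ae_smul_measure (by simp) _⟩
  have hp : ν.real {1/2} = 2 * m := by
    simp [hν, measureReal_def, hm.1.le]
  rw [one_sub_coverProb_of_ae_eq_zero_or_half hlen, hp]
  ring

/-- for arcs of law `ν_m = (1-2m)δ₀ + 2m δ_{1/2}`, the probability of not
covering the circle by `n` such i.i.d. arcs equals `2nm(1-m)^{n-1} + (1-2m)^n`. -/
theorem noncover_two_point (m : ℝ) (hm : m ∈ Set.Ioc (0:ℝ) (1/4)) (n : ℕ) (hn : 1 ≤ n)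
    (ν : Measure ℝ) [IsProbabilityMeasure ν]
    (hν : ν = ENNReal.ofReal (1 - 2*m) • Measure.dirac (0:ℝ)
        + ENNReal.ofReal (2*m) • Measure.dirac (1/2 : ℝ)) :
    1 - coverProb ν n = 2*n*m*(1-m)^(n-1) + (1-2*m)^n :=
  noncover_two_point_general m hm n ν hν
end

section
/- Area asymptotics of the 'finger' sets: for R > 0, ζ ∈ (0, 2/R), let κ = Rζ/π, θ_r = 2π/(ζ r), ρ_r = R/sin(θ_r/2), G_r = (B(0,R) ⊕ [0, ru]) \ B(0,R) for a unit vector u, E_r = G_r ∩ B(0, ρ_r), F_r = G_r \ E_r. Then Leb₂(F_r) = 2R(1-κ)r + O(1) as r → ∞, i.e., the function r ↦ Leb₂(F_r) - 2R(1-κ)r is bounded. -/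
/-!
A linear isometry taking `u` to `e₀ = (1, 0)` preserves Lebesgue measure, so we may take
`u = e₀`. Then `F_r` contains the rectangle `[ρ_r + R, r] × [-R, R]` and lies in
`[ρ_r - 2R, r + R] × [-R, R]`, so its area is `2R(r - ρ_r) + O(R²)`. Finally, with
`x = π/(ζ r)` we have `κ r = R/x`, and `ρ_r - κ r = R (1/sin x - 1/x)` lies in `[0, R/3]`
because `x - x³/6 < sin x < x`.
-/

open MeasureTheory Pointwise

open Metric Set Filter Real

namespace Real

theorem inv_le_inv_sin {x : ℝ} (hx0 : 0 < x) (hxπ : x < π) : x⁻¹ ≤ (sin x)⁻¹ :=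
  inv_anti₀ (sin_pos_of_pos_of_lt_pi hx0 hxπ) (sin_lt hx0).le

theorem inv_sin_sub_inv_le {x : ℝ} (hx0 : 0 < x) (hx1 : x ≤ 1) :
    (sin x)⁻¹ - x⁻¹ ≤ x / 3 := by
  have hsin : 0 < sin x := sin_pos_of_pos_of_lt_pi hx0 (by linarith [pi_gt_three])
  have hcube := sin_gt_sub_cube hx0
  rw [inv_sub_inv hsin.ne' hx0.ne', div_le_div_iff₀ (by positivity) (by norm_num)]
  nlinarith [mul_nonneg (pow_pos hx0 2).le (sub_nonneg.2 hx1), mul_pos (pow_pos hx0 2) hsin]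

end Real

section Finger

variable {E F : Type*} [NormedAddCommGroup E] [InnerProductSpace ℝ E]
  [NormedAddCommGroup F] [InnerProductSpace ℝ F]

def finger (R r : ℝ) (u : E) : Set E :=
  (closedBall 0 R + segment ℝ 0 (r • u)) \ closedBall 0 R

theorem LinearIsometryEquiv.image_finger (T : E ≃ₗᵢ[ℝ] F) (R r : ℝ) (u : E) :
    T '' finger R r u = finger R r (T u) := by
  have hsegment : T '' segment ℝ 0 (r • u) = segment ℝ 0 (r • T u) := by
    simpa using image_segment ℝ T.toLinearEquiv.toLinearMap.toAffineMap 0 (r • u)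
  rw [finger, finger, image_sdiff T.injective, image_add, hsegment, T.image_closedBall, map_zero]

theorem LinearIsometryEquiv.volume_finger_diff_closedBall [MeasurableSpace E] [BorelSpace E]
    [FiniteDimensional ℝ E] [MeasurableSpace F] [BorelSpace F] [FiniteDimensional ℝ F]
    (T : E ≃ₗᵢ[ℝ] F) (R r ρ : ℝ) (u : E) :
    volume (finger R r (T u) \ closedBall 0 ρ) = volume (finger R r u \ closedBall 0 ρ) := by
  rw [← T.image_finger, ← map_zero T, ← T.image_closedBall, ← image_sdiff T.injective,
    T.image_eq_preimage_symm]
  exact T.symm.measurePreserving.measure_preimage_equiv (f := T.symm.toMeasurableEquiv) _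

end Finger

theorem EuclideanSpace.exists_linearIsometryEquiv_apply_eq_single {ι : Type*} [Fintype ι]
    [DecidableEq ι] (i : ι) {u : EuclideanSpace ℝ ι} (hu : ‖u‖ = 1) :
    ∃ T : EuclideanSpace ℝ ι ≃ₗᵢ[ℝ] EuclideanSpace ℝ ι,
      T u = EuclideanSpace.single i 1 := by
  have horth : Orthonormal ℝ (({i} : Set ι).domRestrict fun _ => u) := by
    rw [orthonormal_iff_ite]
    rintro ⟨j, rfl⟩ ⟨k, rfl⟩
    simp [Set.domRestrict, hu]
  obtain ⟨b, hb⟩ := horth.exists_orthonormalBasis_extension_of_card_eq (by simp)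
  exact ⟨b.repr, by rw [← hb i rfl, b.repr_self]⟩

def rectangle (a b c d : ℝ) : Set (EuclideanSpace ℝ (Fin 2)) :=
  {x | x 0 ∈ Icc a b ∧ x 1 ∈ Icc c d}

theorem volume_rectangle (a b c d : ℝ) :
    volume (rectangle a b c d) = ENNReal.ofReal (b - a) * ENNReal.ofReal (d - c) := by
  have hpi : rectangle a b c d = WithLp.ofLp ⁻¹' univ.pi ![Icc a b, Icc c d] := by
    ext x
    simp [rectangle, Fin.forall_fin_two]
  have hmeas : MeasurableSet (univ.pi ![Icc a b, Icc c d]) :=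
    MeasurableSet.univ_pi (Fin.forall_fin_two.2 ⟨measurableSet_Icc, measurableSet_Icc⟩)
  rw [hpi, (PiLp.volume_preserving_ofLp (Fin 2)).measure_preimage hmeas.nullMeasurableSet,
    volume_pi_pi, Fin.prod_univ_two]
  simp [Real.volume_Icc]

theorem div_sin_pi_div_sub_mem_Icc {R ζ r : ℝ} (hR : 0 < R) (hζ : 0 < ζ) (hr : π / ζ ≤ r) :
    R / sin (π / (ζ * r)) - R * ζ / π * r ∈ Icc 0 (R / 3) := by
  have hr0 : 0 < r := (by positivity : 0 < π / ζ).trans_le hr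
  set x := π / (ζ * r)
  have hx0 : 0 < x := by positivity
  have hx1 : x ≤ 1 := by
    rwa [div_le_one (by positivity), ← div_le_iff₀' hζ]
  have hgap : R / sin x - R * ζ / π * r = R * ((sin x)⁻¹ - x⁻¹) := by
    simp only [x]
    field_simp
  rw [hgap]
  refine ⟨mul_nonneg hR.le (sub_nonneg.2 (inv_le_inv_sin hx0 (by linarith [pi_gt_three]))), ?_⟩
  have := (inv_sin_sub_inv_le hx0 hx1).trans (by linarith : x / 3 ≤ 1 / 3)
  nlinarith

local notation "e₀" => EuclideanSpace.single (0 : Fin 2) (1 : ℝ)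

theorem rectangle_subset_finger_diff_closedBall {R ρ : ℝ} (hR : 0 < R) (hρ : 0 < ρ) (r : ℝ) :
    rectangle (ρ + R) r (-R) R ⊆ finger R r e₀ \ closedBall 0 ρ := by
  rintro y ⟨⟨hy0, hy0r⟩, hy1⟩
  have hnorm : ρ + R ≤ ‖y‖ := hy0.trans ((le_abs_self _).trans (PiLp.norm_apply_le y 0))
  have hr : 0 < r := by linarith
  have hdecomp : EuclideanSpace.single 1 (y 1) + (y 0 / r) • (r • e₀) = y := by
    ext i
    fin_cases i <;> simp [hr.ne']
  have hsum : y ∈ closedBall 0 R + segment ℝ 0 (r • e₀) := by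
    rw [← hdecomp]
    refine Set.add_mem_add ?_ ?_
    · simpa [abs_le] using hy1
    · exact (convex_segment _ _).smul_mem_of_zero_mem (left_mem_segment ℝ _ _)
        (right_mem_segment ℝ _ _) ⟨div_nonneg (by linarith) hr.le, (div_le_one hr).2 hy0r⟩
  refine ⟨⟨hsum, ?_⟩, ?_⟩ <;>
  · simp only [mem_closedBall, dist_zero_right, not_le]
    linarith

theorem finger_diff_closedBall_subset_rectangle (R ρ : ℝ) {r : ℝ} (hr : 0 ≤ r) :
    finger R r e₀ \ closedBall 0 ρ ⊆ rectangle (ρ - 2 * R) (r + R) (-R) R := by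
  rintro _ ⟨⟨⟨a, ha, _, hc, rfl⟩, -⟩, hρ⟩
  rw [segment_eq_image] at hc
  obtain ⟨θ, ⟨hθ0, hθ1⟩, rfl⟩ := hc
  simp only [mem_closedBall, dist_zero_right, not_le, smul_zero, zero_add, smul_smul] at ha hρ ⊢
  have hs : θ * r ≤ r := mul_le_of_le_one_left hr hθ1
  have hnorm : ‖a + (θ * r) • e₀‖ ≤ R + θ * r := by
    refine (norm_add_le _ _).trans (add_le_add ha ?_)
    simp [norm_smul, abs_of_nonneg hθ0, abs_of_nonneg hr]
  have ha0 := abs_le.1 ((PiLp.norm_apply_le a 0).trans ha)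
  have ha1 := abs_le.1 ((PiLp.norm_apply_le a 1).trans ha)
  simp only [rectangle, mem_ofPred_eq, PiLp.add_apply, PiLp.smul_apply, PiLp.single_apply,
    smul_eq_mul, mem_Icc, Fin.isValue, ↓reduceIte, one_ne_zero, mul_one, mul_zero, add_zero]
  refine ⟨⟨?_, ?_⟩, ?_, ?_⟩ <;> linarith

theorem abs_volume_finger_diff_closedBall_sub_le {R ρ r : ℝ} (hR : 0 < R) (hρ : 0 < ρ)
    (hr : 0 ≤ r) (hρr : ρ ≤ r + 3 * R) :
    |(volume (finger R r e₀ \ closedBall 0 ρ)).toReal - 2 * R * (r - ρ)| ≤ 6 * R ^ 2 := by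
  have hlower := measure_mono (μ := volume) (rectangle_subset_finger_diff_closedBall hR hρ r)
  have hupper := measure_mono (μ := volume) (finger_diff_closedBall_subset_rectangle R ρ hr)
  rw [volume_rectangle, ← ENNReal.ofReal_mul' (by linarith)] at hlower hupper
  have hlower' := ENNReal.toReal_mono (hupper.trans_lt ENNReal.ofReal_lt_top).ne hlower
  have hupper' := ENNReal.toReal_mono ENNReal.ofReal_ne_top hupper
  rw [ENNReal.toReal_ofReal'] at hlower'
  rw [ENNReal.toReal_ofReal (by nlinarith)] at hupper'
  rw [abs_le]
  constructor <;> nlinarith [le_max_left ((r - (ρ + R)) * (R - -R)) 0]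

/-- area asymptotics of the 'finger' sets. With `κ = Rζ/π`,
`ρ_r = R/sin(θ_r/2) = R/sin(π/(ζr))`, `G_r = (B(0,R) ⊕ [0, ru]) \ B(0,R)` and
`F_r = G_r \ B(0, ρ_r)`, one has `Leb₂(F_r) = 2R(1-κ)r + O(1)` as `r → ∞`. -/
theorem finger_area_asymptotics (R ζ : ℝ) (hR : 0 < R) (hζ : ζ ∈ Set.Ioo 0 (2/R))
    (u : EuclideanSpace ℝ (Fin 2)) (hu : ‖u‖ = 1) :
    ∃ C : ℝ, ∀ᶠ r in Filter.atTop,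
      |(volume (((Metric.closedBall (0 : EuclideanSpace ℝ (Fin 2)) R
              + segment ℝ 0 (r • u)) \ Metric.closedBall 0 R)
          \ Metric.closedBall 0 (R / Real.sin (Real.pi / (ζ * r))))).toReal
        - 2*R*(1 - R*ζ/Real.pi)*r| ≤ C := by
  obtain ⟨hζ0, hζ2⟩ := hζ
  obtain ⟨T, hT⟩ := EuclideanSpace.exists_linearIsometryEquiv_apply_eq_single 0 hu
  have hκ : R * ζ / π < 1 := by
    rw [div_lt_one pi_pos]
    nlinarith [(lt_div_iff₀' hR).1 hζ2, pi_gt_three]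
  refine ⟨7 * R ^ 2, ?_⟩
  filter_upwards [eventually_ge_atTop (π / ζ)] with r hr
  have hr0 : 0 < r := (by positivity : 0 < π / ζ).trans_le hr
  obtain ⟨hgap_nonneg, hgap_le⟩ := div_sin_pi_div_sub_mem_Icc hR hζ0 hr
  have hκr : 0 < R * ζ / π * r := by positivity
  set ρ := R / sin (π / (ζ * r))
  have hvol := abs_volume_finger_diff_closedBall_sub_le (ρ := ρ) hR (by linarith) hr0.le
    (by nlinarith)
  rw [← hT, T.volume_finger_diff_closedBall] at hvol
  change |(volume (finger R r u \ closedBall 0 ρ)).toReal - _| ≤ _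
  rw [abs_le] at hvol ⊢
  constructor <;> nlinarith [mul_le_mul_of_nonneg_left hgap_le hR.le]
end

section
/- Poincaré/Bonferroni bound used in the lower bound: let V_0, …, V_{N-1} be events such that each V_k = Z_k ∩ W_k where W_0,…,W_{N-1} and any intersection of Z_k's are independent of the W's, P(W_k) = e^{-F} for all k, and for all ℓ ≥ 2 and k₁<…<k_ℓ, P(Z_{k₁} ∩ … ∩ Z_{k_ℓ}) ≤ e^{T - E}·e^{-ℓT} for constants E ≥ T ≥ 0, F ≥ 0. Then |P(∪ V_k) - ∑ P(V_k)| ≤ e^{T-E}·((1 + e^{-(F+T)})^N - 1 - N e^{-(F+T)}) ≤ (N²/2)·e^{T-E}·e^{-2(F+T)}·e^{N e^{-(F+T)}}. -/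
/-!
Only the second Bonferroni inequality is needed: `∑ P(V_k) - P(⋃ V_k)` lies between `0` and the
sum of `P(V_i ∩ V_j)` over pairs `i < j`. By the product formula each pair term is at most
`e^{T-E} x²` with `x = e^{-(F+T)}`, and `C(N,2) x²` is the first term of the binomial expansion of
`(1 + x)^N - 1 - N x`, which in turn is at most `(N²/2) x² e^{N x}`.
-/

open MeasureTheory Finset

lemma Finset.sum_powersetCard_succ_insert {α β : Type*} [DecidableEq α] [AddCommMonoid β]
    {a : α} {s : Finset α} (ha : a ∉ s) (n : ℕ) (f : Finset α → β) :
    ∑ t ∈ (insert a s).powersetCard (n + 1), f t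
      = ∑ t ∈ s.powersetCard (n + 1), f t + ∑ t ∈ s.powersetCard n, f (insert a t) := by
  rw [powersetCard_succ_insert ha, sum_union, sum_image]
  · exact insert_erase_invOn.2.injOn.mono fun t ht ↦ notMem_mono (mem_powersetCard.1 ht).1 ha
  · aesop (add simp [disjoint_left, insert_subset_iff])

lemma MeasureTheory.sum_measureReal_le_measureReal_biUnion_add_sum_pairs {Ω ι : Type*}
    [MeasurableSpace Ω] [DecidableEq ι] (μ : Measure Ω) [IsFiniteMeasure μ]
    {A : ι → Set Ω} (hA : ∀ k, MeasurableSet (A k)) (s : Finset ι) :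
    ∑ k ∈ s, μ.real (A k)
      ≤ μ.real (⋃ k ∈ s, A k) + ∑ t ∈ s.powersetCard 2, μ.real (⋂ k ∈ t, A k) := by
  induction s using Finset.induction with
  | empty => simp [show powersetCard 2 (∅ : Finset ι) = ∅ from rfl]
  | @insert a s ha ih =>
    have hmod := measureReal_union_add_inter (μ := μ) (s := A a)
      (s.measurableSet_biUnion fun k _ ↦ hA k) (h₂ := measure_ne_top μ _)
    have hinter : μ.real (A a ∩ ⋃ k ∈ s, A k) ≤ ∑ k ∈ s, μ.real (A a ∩ A k) := by
      rw [Set.inter_iUnion₂]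
      exact measureReal_biUnion_finset_le s _
    have hpairs : ∑ t ∈ (insert a s).powersetCard 2, μ.real (⋂ k ∈ t, A k)
        = ∑ t ∈ s.powersetCard 2, μ.real (⋂ k ∈ t, A k) + ∑ k ∈ s, μ.real (A a ∩ A k) := by
      rw [sum_powersetCard_succ_insert ha, powersetCard_one, sum_map]
      simp
    rw [sum_insert ha, set_biUnion_insert, hpairs]
    linarith

lemma MeasureTheory.abs_measureReal_iUnion_sub_sum_le_sum_pairs {Ω ι : Type*}
    [MeasurableSpace Ω] [Fintype ι] [DecidableEq ι] (μ : Measure Ω) [IsFiniteMeasure μ]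
    {A : ι → Set Ω} (hA : ∀ k, MeasurableSet (A k)) :
    |μ.real (⋃ k, A k) - ∑ k, μ.real (A k)|
      ≤ ∑ t ∈ univ.powersetCard 2, μ.real (⋂ k ∈ t, A k) := by
  have hlow := sum_measureReal_le_measureReal_biUnion_add_sum_pairs μ hA univ
  simp only [mem_univ, Set.iUnion_true] at hlow
  have hup := measureReal_iUnion_fintype_le (μ := μ) A
  have hpairs_nonneg : 0 ≤ ∑ t ∈ univ.powersetCard 2, μ.real (⋂ k ∈ t, A k) :=
    sum_nonneg fun _ _ ↦ measureReal_nonneg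
  exact abs_le.2 ⟨by linarith, by linarith⟩

lemma one_add_pow_succ_sub_one_sub_mul {R : Type*} [CommRing R] (x : R) (N : ℕ) :
    (1 + x) ^ (N + 1) - 1 - (N + 1 : ℕ) * x
      = (1 + x) * ((1 + x) ^ N - 1 - N * x) + N * x ^ 2 := by
  push_cast; ring

lemma choose_two_mul_sq_le_one_add_pow_sub {x : ℝ} (hx : 0 ≤ x) (N : ℕ) :
    (N.choose 2 : ℝ) * x ^ 2 ≤ (1 + x) ^ N - 1 - N * x := by
  induction N with
  | zero => simp
  | succ N ih =>
    rw [Nat.choose_succ_succ, Nat.choose_one_right, one_add_pow_succ_sub_one_sub_mul]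
    push_cast
    nlinarith [mul_nonneg hx (le_trans (by positivity) ih)]

lemma one_add_pow_sub_le_sq_mul_exp {x : ℝ} (hx : 0 ≤ x) (N : ℕ) :
    (1 + x) ^ N - 1 - N * x ≤ (N ^ 2 / 2) * x ^ 2 * Real.exp (N * x) := by
  induction N with
  | zero => simp
  | succ N ih =>
    have hexp : Real.exp x * Real.exp (N * x) = Real.exp ((N + 1 : ℕ) * x) := by
      rw [← Real.exp_add]; push_cast; ring_nf
    have hone : 1 ≤ Real.exp ((N + 1 : ℕ) * x) := Real.one_le_exp (by positivity)
    calc (1 + x) ^ (N + 1) - 1 - (N + 1 : ℕ) * x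
        = (1 + x) * ((1 + x) ^ N - 1 - N * x) + N * x ^ 2 :=
          one_add_pow_succ_sub_one_sub_mul x N
      _ ≤ Real.exp x * ((N ^ 2 / 2) * x ^ 2 * Real.exp (N * x)) + N * x ^ 2 := by
        gcongr
        · exact le_trans (by positivity) (choose_two_mul_sq_le_one_add_pow_sub hx N)
        · linarith [Real.add_one_le_exp x]
      _ = (N ^ 2 / 2) * x ^ 2 * Real.exp ((N + 1 : ℕ) * x) + N * x ^ 2 := by rw [← hexp]; ring
      _ ≤ ((N + 1 : ℕ) ^ 2 / 2) * x ^ 2 * Real.exp ((N + 1 : ℕ) * x) := by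
        push_cast at hone ⊢
        nlinarith [mul_nonneg (mul_nonneg (Nat.cast_nonneg N) (sq_nonneg x)) (sub_nonneg.2 hone),
          mul_nonneg (sq_nonneg x) (zero_le_one.trans hone)]

theorem inclusion_exclusion_residual_general {Ω : Type*} [MeasurableSpace Ω] (P : Measure Ω)
    [IsProbabilityMeasure P] (N : ℕ) (V Z W : Fin N → Set Ω)
    (hVm : ∀ k, MeasurableSet (V k))
    (E T F : ℝ)
    (hindep : ∀ s : Finset (Fin N), 2 ≤ s.card →
      (P (⋂ k ∈ s, V k)).toReal
        = (P (⋂ k ∈ s, Z k)).toReal * ∏ k ∈ s, (P (W k)).toReal)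
    (hZ : ∀ s : Finset (Fin N), 2 ≤ s.card →
      (P (⋂ k ∈ s, Z k)).toReal ≤ Real.exp (T - E) * Real.exp (-(s.card : ℝ) * T))
    (hW : ∀ k, (P (W k)).toReal = Real.exp (-F)) :
    |(P (⋃ k, V k)).toReal - ∑ k, (P (V k)).toReal|
      ≤ Real.exp (T - E) *
        ((1 + Real.exp (-(F+T)))^N - 1 - N * Real.exp (-(F+T))) ∧
    Real.exp (T - E) * ((1 + Real.exp (-(F+T)))^N - 1 - N * Real.exp (-(F+T)))
      ≤ (N^2/2) * Real.exp (T - E) * Real.exp (-2*(F+T))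
          * Real.exp (N * Real.exp (-(F+T))) := by
  simp only [← measureReal_def] at hindep hZ hW ⊢
  set x := Real.exp (-(F + T))
  set c := Real.exp (T - E)
  have hx : 0 ≤ x := (Real.exp_pos _).le
  have hx_sq : x ^ 2 = Real.exp (-2 * (F + T)) := by rw [← Real.exp_nat_mul]; ring_nf
  have hpair : ∀ t ∈ (univ : Finset (Fin N)).powersetCard 2,
      P.real (⋂ k ∈ t, V k) ≤ c * x ^ 2 := by
    intro t ht
    have hcard : t.card = 2 := (mem_powersetCard.1 ht).2
    calc P.real (⋂ k ∈ t, V k) = P.real (⋂ k ∈ t, Z k) * Real.exp (-F) ^ 2 := by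
          rw [hindep t hcard.ge, prod_congr rfl fun k _ ↦ hW k, prod_const, hcard]
      _ ≤ c * Real.exp (-2 * T) * Real.exp (-F) ^ 2 := by
          gcongr; simpa [hcard] using hZ t hcard.ge
      _ = c * x ^ 2 := by rw [hx_sq, mul_assoc, ← Real.exp_nat_mul, ← Real.exp_add]; ring_nf
  have hpairs : ∑ t ∈ univ.powersetCard 2, P.real (⋂ k ∈ t, V k)
      ≤ c * ((1 + x) ^ N - 1 - N * x) :=
    calc _ ≤ (N.choose 2 : ℝ) * (c * x ^ 2) := by simpa using sum_le_card_nsmul _ _ _ hpair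
      _ ≤ c * ((1 + x) ^ N - 1 - N * x) := by
          rw [mul_left_comm]; gcongr; exact choose_two_mul_sq_le_one_add_pow_sub hx N
  refine ⟨(abs_measureReal_iUnion_sub_sum_le_sum_pairs P hVm).trans hpairs, ?_⟩
  calc c * ((1 + x) ^ N - 1 - N * x) ≤ c * ((N ^ 2 / 2) * x ^ 2 * Real.exp (N * x)) := by
        gcongr; exact one_add_pow_sub_le_sq_mul_exp hx N
    _ = _ := by rw [hx_sq]; ring

/-- Poincaré/Bonferroni bound of Appendix 1. With `V_k = Z_k ∩ W_k`, the `Z`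
and `W` parts independent (expressed by the product formula for intersections), `P(W_k) =
e^{-F}`, and `P(⋂ Z_{k_i}) ≤ e^{T-E} e^{-ℓT}` for any `ℓ ≥ 2` of them, the deviation of
`P(⋃ V_k)` from `∑ P(V_k)` is bounded by
`e^{T-E}((1+e^{-(F+T)})^N - 1 - N e^{-(F+T)}) ≤ (N²/2) e^{T-E} e^{-2(F+T)} e^{N e^{-(F+T)}}`. -/
theorem inclusion_exclusion_residual {Ω : Type*} [MeasurableSpace Ω] (P : Measure Ω)
    [IsProbabilityMeasure P] (N : ℕ) (V Z W : Fin N → Set Ω)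
    (hVm : ∀ k, MeasurableSet (V k)) (hZm : ∀ k, MeasurableSet (Z k))
    (hWm : ∀ k, MeasurableSet (W k))
    (hVZW : ∀ k, V k = Z k ∩ W k)
    (E T F : ℝ) (hT : 0 ≤ T) (hTE : T ≤ E) (hF : 0 ≤ F)
    (hindep : ∀ s : Finset (Fin N), 2 ≤ s.card →
      (P (⋂ k ∈ s, V k)).toReal
        = (P (⋂ k ∈ s, Z k)).toReal * ∏ k ∈ s, (P (W k)).toReal)
    (hZ : ∀ s : Finset (Fin N), 2 ≤ s.card →
      (P (⋂ k ∈ s, Z k)).toReal ≤ Real.exp (T - E) * Real.exp (-(s.card : ℝ) * T))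
    (hW : ∀ k, (P (W k)).toReal = Real.exp (-F)) :
    |(P (⋃ k, V k)).toReal - ∑ k, (P (V k)).toReal|
      ≤ Real.exp (T - E) *
        ((1 + Real.exp (-(F+T)))^N - 1 - N * Real.exp (-(F+T))) ∧
    Real.exp (T - E) * ((1 + Real.exp (-(F+T)))^N - 1 - N * Real.exp (-(F+T)))
      ≤ (N^2/2) * Real.exp (T - E) * Real.exp (-2*(F+T))
          * Real.exp (N * Real.exp (-(F+T))) :=
  inclusion_exclusion_residual_general P N V Z W hVm E T F hindep hZ hW
end
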